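/- arXiv:2306.11964 — 8 statements merged into one kernel-verified Lean document; each statement's English description precedes it below -/
import Mathlib

section
/- Let G_1,…,G_p be pairwise disjoint subsets of {1,…,m}, let b_1,…,b_q be positive integers with b_1 + … + b_q = m, and let L,U ∈ ℤ^{q×p}. Consider the polytope 𝓜_GF of all matrices M ∈ [0,1]^{m×q} satisfying: (i) Σ_j M_{ij} = 1 for every i ∈ [m]; (ii) Σ_i M_{ij} = b_j for every j ∈ [q]; and (iii) L_{jℓ} ≤ Σ_{i∈G_ℓ} M_{ij} ≤ U_{jℓ} for every j ∈ [q] and ℓ ∈ [p]. Then 𝓜_GF is an integral polytope: every extreme point of 𝓜_GF has all entries in {0,1}. -/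
open Finset


def IsIntS3 (x : ℝ) : Prop := ∃ z : ℤ, x = (z : ℝ)

lemma isIntS3_sum {β : Type*} (s : Finset β) (f : β → ℝ)
    (h : ∀ x ∈ s, IsIntS3 (f x)) : IsIntS3 (∑ x ∈ s, f x) := by
  classical
  induction s using Finset.induction_on with
  | empty => exact ⟨0, by simp⟩
  | insert a s hx ih =>
    obtain ⟨z, hz⟩ := h a (mem_insert_self _ _)
    obtain ⟨w, hw⟩ := ih (fun x hx' => h x (mem_insert_of_mem hx'))
    exact ⟨z + w, by rw [Finset.sum_insert hx, hz, hw]; push_cast; ring⟩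

lemma isIntS3_sub {x y : ℝ} (hx : IsIntS3 x) (hy : IsIntS3 y) : IsIntS3 (x - y) := by
  obtain ⟨z, rfl⟩ := hx; obtain ⟨w, rfl⟩ := hy
  exact ⟨z - w, by push_cast; ring⟩

lemma secondFracS3 {β : Type*} {s : Finset β} {f : β → ℝ} {e : β}
    (he : e ∈ s) (hs : IsIntS3 (∑ x ∈ s, f x)) (hne : ¬ IsIntS3 (f e)) :
    ∃ e' ∈ s, e' ≠ e ∧ ¬ IsIntS3 (f e') := by
  classical
  by_contra hc
  push_neg at hc
  have h1 : IsIntS3 (∑ x ∈ s.erase e, f x) :=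
    isIntS3_sum _ _ (fun x hx => hc x (mem_of_mem_erase hx) (ne_of_mem_erase hx))
  have h2 : f e = (∑ x ∈ s, f x) - (∑ x ∈ s.erase e, f x) := by
    rw [← Finset.add_sum_erase s f he]; ring
  exact hne (h2 ▸ isIntS3_sub hs h1)

lemma notIntS3 {x : ℝ} (h0 : 0 < x) (h1 : x < 1) : ¬ IsIntS3 x := by
  rintro ⟨z, rfl⟩
  have hz0 : 0 < z := by exact_mod_cast h0
  have hz1 : z < 1 := by exact_mod_cast h1
  omega

lemma evS3_lt {a b : ℝ} (h : a < b) (c : ℝ) :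
    ∀ᶠ ε in nhdsWithin (0:ℝ) (Set.Ioi 0), a + ε * c < b := by
  have h1 : Filter.Tendsto (fun ε : ℝ => a + ε * c) (nhds 0) (nhds (a + 0 * c)) :=
    (continuous_const.add (continuous_id.mul continuous_const)).tendsto 0
  rw [zero_mul, add_zero] at h1
  exact (h1.mono_left nhdsWithin_le_nhds).eventually_lt_const h

lemma evS3_gt {a b : ℝ} (h : a < b) (c : ℝ) :
    ∀ᶠ ε in nhdsWithin (0:ℝ) (Set.Ioi 0), a < b + ε * c := by
  have h1 : Filter.Tendsto (fun ε : ℝ => b + ε * c) (nhds 0) (nhds (b + 0 * c)) :=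
    (continuous_const.add (continuous_id.mul continuous_const)).tendsto 0
  rw [zero_mul, add_zero] at h1
  exact (h1.mono_left nhdsWithin_le_nhds).eventually_const_lt h

lemma sum_dite_subtypeS3 {α : Type*} [Fintype α] [DecidableEq α] (s : Finset α)
    (d : {x // x ∈ s} → ℝ) (P : α → Prop) [DecidablePred P] :
    ∑ e : α, (if P e then (if h : e ∈ s then d ⟨e, h⟩ else 0) else 0)
      = ∑ e ∈ univ.filter (fun e : {x // x ∈ s} => P ↑e), d e := by
  rw [Finset.sum_filter]
  rw [show (∑ e : {x // x ∈ s}, if P ↑e then d e else 0)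
      = ∑ e ∈ s, (if P e then (if h : e ∈ s then d ⟨e, h⟩ else 0) else 0) from ?_]
  · refine (Finset.sum_subset (Finset.subset_univ s) ?_).symm
    intro x _ hx
    rw [dif_neg hx]
    split <;> rfl
  · rw [← Finset.sum_coe_sort s]
    refine Finset.sum_congr rfl ?_
    intro e _
    by_cases hP : P (e : α)
    · rw [if_pos hP, if_pos hP, dif_pos e.2]
    · rw [if_neg hP, if_neg hP]

lemma coreS3 {E Vl Vr : Type*} [Fintype E] [Fintype Vl] [Fintype Vr]
    [DecidableEq Vl] [DecidableEq Vr] [Nonempty E]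
    (fl : E → Vl) (fr : E → Vr)
    (hdl : ∀ v, ∃ e₁ e₂ : E, e₁ ≠ e₂ ∧ fl e₁ = v ∧ fl e₂ = v)
    (hdr : ∀ v, ∃ e₁ e₂ : E, e₁ ≠ e₂ ∧ fr e₁ = v ∧ fr e₂ = v) :
    ∃ d : E → ℝ, d ≠ 0 ∧ (∀ v, ∑ e ∈ univ.filter (fun e => fl e = v), d e = 0) ∧
      (∀ v, ∑ e ∈ univ.filter (fun e => fr e = v), d e = 0) := by
  classical
  have hVl : Nonempty Vl := ⟨fl (Classical.arbitrary E)⟩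
  have hfibl : ∀ v : Vl, 2 ≤ (univ.filter (fun e => fl e = v)).card := by
    intro v
    obtain ⟨e₁, e₂, hne, h₁, h₂⟩ := hdl v
    exact Finset.one_lt_card.2 ⟨e₁, mem_filter.2 ⟨mem_univ _, h₁⟩, e₂, mem_filter.2 ⟨mem_univ _, h₂⟩, hne⟩
  have hfibr : ∀ v : Vr, 2 ≤ (univ.filter (fun e => fr e = v)).card := by
    intro v
    obtain ⟨e₁, e₂, hne, h₁, h₂⟩ := hdr v
    exact Finset.one_lt_card.2 ⟨e₁, mem_filter.2 ⟨mem_univ _, h₁⟩, e₂, mem_filter.2 ⟨mem_univ _, h₂⟩, hne⟩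
  have hcl : 2 * Fintype.card Vl ≤ Fintype.card E := by
    have h := Finset.card_eq_sum_card_fiberwise (f := fl) (s := univ) (t := univ)
      (fun x _ => mem_univ _)
    calc 2 * Fintype.card Vl = ∑ _v : Vl, 2 := by
          rw [Finset.sum_const, Finset.card_univ, smul_eq_mul, mul_comm]
      _ ≤ ∑ v : Vl, (univ.filter (fun e => fl e = v)).card :=
          Finset.sum_le_sum (fun v _ => hfibl v)
      _ = Fintype.card E := by rw [← h, Finset.card_univ]
  have hcr : 2 * Fintype.card Vr ≤ Fintype.card E := by
    have h := Finset.card_eq_sum_card_fiberwise (f := fr) (s := univ) (t := univ)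
      (fun x _ => mem_univ _)
    calc 2 * Fintype.card Vr = ∑ _v : Vr, 2 := by
          rw [Finset.sum_const, Finset.card_univ, smul_eq_mul, mul_comm]
      _ ≤ ∑ v : Vr, (univ.filter (fun e => fr e = v)).card :=
          Finset.sum_le_sum (fun v _ => hfibr v)
      _ = Fintype.card E := by rw [← h, Finset.card_univ]
  have hVl1 : 1 ≤ Fintype.card Vl := Fintype.card_pos
  -- linear maps
  let Φ : (E → ℝ) →ₗ[ℝ] ((Vl → ℝ) × (Vr → ℝ)) :=
  { toFun := fun d => (fun v => ∑ e ∈ univ.filter (fun e => fl e = v), d e,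
                       fun v => ∑ e ∈ univ.filter (fun e => fr e = v), d e)
    map_add' := fun x y => by
      refine Prod.ext ?_ ?_ <;> funext v <;> simp [Finset.sum_add_distrib]
    map_smul' := fun r x => by
      refine Prod.ext ?_ ?_ <;> funext v <;> simp [Finset.mul_sum] }
  let φ : ((Vl → ℝ) × (Vr → ℝ)) →ₗ[ℝ] ℝ :=
  { toFun := fun x => (∑ v, x.1 v) - (∑ v, x.2 v)
    map_add' := fun x y => by simp [Finset.sum_add_distrib]; ring
    map_smul' := fun r x => by
      show (∑ v, r * x.1 v) - (∑ v, r * x.2 v) = r * ((∑ v, x.1 v) - (∑ v, x.2 v))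
      rw [mul_sub, Finset.mul_sum, Finset.mul_sum] }
  have hcomp : ∀ d : E → ℝ, φ (Φ d) = 0 := by
    intro d
    show (∑ v : Vl, ∑ e ∈ univ.filter (fun e => fl e = v), d e)
      - (∑ v : Vr, ∑ e ∈ univ.filter (fun e => fr e = v), d e) = 0
    rw [Finset.sum_fiberwise_of_maps_to (fun x _ => mem_univ _),
        Finset.sum_fiberwise_of_maps_to (fun x _ => mem_univ _), sub_self]
  have hker : ¬ Function.Injective Φ := by
    intro hinj
    have h1 : Module.finrank ℝ (LinearMap.range Φ) = Fintype.card E := by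
      rw [LinearMap.finrank_range_of_inj hinj, Module.finrank_pi]
    have hle : LinearMap.range Φ ≤ LinearMap.ker φ := by
      rintro x ⟨d, rfl⟩; exact hcomp d
    have hφsurj : Function.Surjective φ := by
      intro r
      refine ⟨(fun _ => r / (Fintype.card Vl : ℝ), 0), ?_⟩
      have h0 : (Fintype.card Vl : ℝ) ≠ 0 := Nat.cast_ne_zero.2 Fintype.card_ne_zero
      show (∑ _v : Vl, r / (Fintype.card Vl : ℝ)) - (∑ _v : Vr, (0:ℝ)) = r
      rw [Finset.sum_const, Finset.sum_const, Finset.card_univ, smul_zero, sub_zero,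
        nsmul_eq_mul]
      field_simp
    have h2 : Module.finrank ℝ (LinearMap.ker φ) + 1 = Fintype.card Vl + Fintype.card Vr := by
      have h := LinearMap.finrank_range_add_finrank_ker φ
      rw [LinearMap.range_eq_top.2 hφsurj, finrank_top, Module.finrank_self,
        Module.finrank_prod, Module.finrank_pi, Module.finrank_pi] at h
      omega
    have h3 : Fintype.card E ≤ Module.finrank ℝ (LinearMap.ker φ) := by
      rw [← h1]; exact Submodule.finrank_mono hle
    omega
  rw [Function.not_injective_iff] at hker
  obtain ⟨a, b, hab, hne⟩ := hker
  have h0 : Φ (a - b) = 0 := by rw [map_sub, hab, sub_self]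
  refine ⟨a - b, sub_ne_zero.2 hne, ?_, ?_⟩
  · intro v
    have := congrFun (congrArg Prod.fst h0) v
    exact this
  · intro v
    have := congrFun (congrArg Prod.snd h0) v
    exact this


/-- For pairwise disjoint groups `G_1,…,G_p ⊆ {1,…,m}`, positive block
sizes `b_1,…,b_q` with `b_1+…+b_q = m`, and `L, U ∈ ℤ^{q×p}`, the polytope `𝓜_GF` of
matrices `M ∈ [0,1]^{m×q}` with unit row sums, column sums `b_j`, and group-fairness
constraints `L_{jℓ} ≤ Σ_{i∈G_ℓ} M_{ij} ≤ U_{jℓ}` is integral: every extreme point has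
all entries in `{0,1}`. -/
theorem statement_3 (m q p : ℕ)
    (G : Fin p → Finset (Fin m))
    (hG : ∀ ℓ ℓ' : Fin p, ℓ ≠ ℓ' → Disjoint (G ℓ) (G ℓ'))
    (b : Fin q → ℕ) (hb : ∀ j, 0 < b j) (hbsum : ∑ j, b j = m)
    (L U : Fin q → Fin p → ℤ) :
    ∀ M ∈ Set.extremePoints ℝ
        {M : Matrix (Fin m) (Fin q) ℝ |
          (∀ i j, 0 ≤ M i j ∧ M i j ≤ 1) ∧
          (∀ i, ∑ j, M i j = 1) ∧
          (∀ j, ∑ i, M i j = (b j : ℝ)) ∧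
          (∀ (j : Fin q) (ℓ : Fin p),
            (L j ℓ : ℝ) ≤ (∑ i ∈ G ℓ, M i j) ∧ (∑ i ∈ G ℓ, M i j) ≤ (U j ℓ : ℝ))},
      ∀ i j, M i j = 0 ∨ M i j = 1 := by
  classical
  intro M hM
  rw [mem_extremePoints] at hM
  obtain ⟨hMS, hMext⟩ := hM
  obtain ⟨hbox, hrow, hcol, hgrp⟩ := hMS
  by_contra hcon
  push_neg at hcon
  obtain ⟨i0, j0, hi0, hj0⟩ := hcon
  set frac : Finset (Fin m × Fin q) :=
    univ.filter (fun e => ¬ IsIntS3 (M e.1 e.2)) with hfrac_def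
  have hmemfrac : ∀ e : Fin m × Fin q, e ∈ frac ↔ ¬ IsIntS3 (M e.1 e.2) := by
    intro e; rw [hfrac_def]; simp
  have hfrac_lt : ∀ e ∈ frac, 0 < M e.1 e.2 ∧ M e.1 e.2 < 1 := by
    intro e he
    obtain ⟨h0, h1⟩ := hbox e.1 e.2
    rw [hmemfrac] at he
    refine ⟨lt_of_le_of_ne h0 ?_, lt_of_le_of_ne h1 ?_⟩
    · exact fun h => he ⟨0, by rw [← h]; norm_num⟩
    · exact fun h => he ⟨1, by rw [h]; norm_num⟩
  have h00 : (i0, j0) ∈ frac := by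
    rw [hmemfrac]
    obtain ⟨h0, h1⟩ := hbox i0 j0
    exact notIntS3 (lt_of_le_of_ne h0 (Ne.symm hi0)) (lt_of_le_of_ne h1 hj0)
  set vert : Fin m × Fin q → Fin q × Option (Fin p) :=
    fun e => (e.2, if h : ∃ ℓ, e.1 ∈ G ℓ ∧ IsIntS3 (∑ i ∈ G ℓ, M i e.2)
      then some h.choose else none) with hvert_def
  have hvert_fst : ∀ e, (vert e).1 = e.2 := fun e => by rw [hvert_def]
  have hvert_some : ∀ (e : Fin m × Fin q) (j : Fin q) (ℓ : Fin p),
      vert e = (j, some ℓ) ↔ e.2 = j ∧ e.1 ∈ G ℓ ∧ IsIntS3 (∑ i ∈ G ℓ, M i e.2) := by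
    intro e j ℓ
    rw [hvert_def]
    dsimp only
    constructor
    · intro h
      rw [Prod.ext_iff] at h
      obtain ⟨h1, h2⟩ := h
      dsimp at h1 h2
      split_ifs at h2 with hex
      · obtain ⟨hmem, hint⟩ := hex.choose_spec
        rw [Option.some_inj] at h2
        subst h2
        exact ⟨h1, hmem, hint⟩
    · rintro ⟨h1, hmem, hint⟩
      have hex : ∃ ℓ', e.1 ∈ G ℓ' ∧ IsIntS3 (∑ i ∈ G ℓ', M i e.2) := ⟨ℓ, hmem, hint⟩
      have hch : hex.choose = ℓ := by
        by_contra hne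
        exact (Finset.disjoint_left.1 (hG _ _ hne) hex.choose_spec.1) hmem
      rw [dif_pos hex, hch, h1]
  have hvert_none : ∀ e : Fin m × Fin q,
      vert e = (e.2, none) ↔ ¬ ∃ ℓ, e.1 ∈ G ℓ ∧ IsIntS3 (∑ i ∈ G ℓ, M i e.2) := by
    intro e
    rw [hvert_def]
    dsimp only
    split_ifs with hex
    · simp [hex]
    · simp [hex]
  have hEne : Nonempty {x // x ∈ frac} := ⟨⟨(i0, j0), h00⟩⟩
  set fl : {x // x ∈ frac} → {y // y ∈ frac.image Prod.fst} :=
    fun e => ⟨(e : Fin m × Fin q).1, mem_image_of_mem Prod.fst e.2⟩ with hfl_def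
  set fr : {x // x ∈ frac} → {y // y ∈ frac.image vert} :=
    fun e => ⟨vert (e : Fin m × Fin q), mem_image_of_mem vert e.2⟩ with hfr_def
  -- degree hypotheses
  have hdl : ∀ v, ∃ e₁ e₂, e₁ ≠ e₂ ∧ fl e₁ = v ∧ fl e₂ = v := by
    intro v
    obtain ⟨e0, he0, hv⟩ := mem_image.1 v.2
    have hrowInt : IsIntS3 (∑ j, M e0.1 j) := ⟨1, by rw [hrow e0.1]; norm_num⟩
    obtain ⟨j', -, hj'ne, hj'frac⟩ :=
      secondFracS3 (mem_univ e0.2) hrowInt ((hmemfrac e0).1 he0)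
    have hj'mem : (e0.1, j') ∈ frac := (hmemfrac _).2 hj'frac
    refine ⟨⟨e0, he0⟩, ⟨(e0.1, j'), hj'mem⟩, ?_, Subtype.ext hv, Subtype.ext hv⟩
    intro h
    have h2 := congrArg Subtype.val h
    exact hj'ne (congrArg Prod.snd h2).symm
  have hdr : ∀ v, ∃ e₁ e₂, e₁ ≠ e₂ ∧ fr e₁ = v ∧ fr e₂ = v := by
    intro v
    obtain ⟨e0, he0, hv⟩ := mem_image.1 v.2
    rcases ho : (vert e0).2 with _ | ℓ
    · -- none case
      have hve : vert e0 = (e0.2, none) := Prod.ext (hvert_fst e0) ho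
      have hT := (hvert_none e0).1 hve
      have hTsum : IsIntS3 (∑ i ∈ univ.filter
          (fun i => ¬ ∃ ℓ, i ∈ G ℓ ∧ IsIntS3 (∑ i' ∈ G ℓ, M i' e0.2)), M i e0.2) := by
        have hsplit := Finset.sum_filter_add_sum_filter_not univ
          (fun i => ∃ ℓ, i ∈ G ℓ ∧ IsIntS3 (∑ i' ∈ G ℓ, M i' e0.2)) (fun i => M i e0.2)
        have hset : univ.filter (fun i => ∃ ℓ, i ∈ G ℓ ∧ IsIntS3 (∑ i' ∈ G ℓ, M i' e0.2))
            = (univ.filter (fun ℓ => IsIntS3 (∑ i' ∈ G ℓ, M i' e0.2))).biUnion G := by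
          ext i
          simp only [mem_filter, mem_univ, true_and, mem_biUnion]
          tauto
        have hint1 : IsIntS3 (∑ i ∈ univ.filter
            (fun i => ∃ ℓ, i ∈ G ℓ ∧ IsIntS3 (∑ i' ∈ G ℓ, M i' e0.2)), M i e0.2) := by
          rw [hset, Finset.sum_biUnion (fun a _ b _ hne => hG a b hne)]
          exact isIntS3_sum _ _ (fun ℓ hℓ => (mem_filter.1 hℓ).2)
        have hbj : IsIntS3 (∑ i, M i e0.2) :=
          ⟨(b e0.2 : ℤ), by rw [hcol e0.2]; push_cast; ring⟩
        have heq : (∑ i ∈ univ.filter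
            (fun i => ¬ ∃ ℓ, i ∈ G ℓ ∧ IsIntS3 (∑ i' ∈ G ℓ, M i' e0.2)), M i e0.2)
            = (∑ i, M i e0.2) - (∑ i ∈ univ.filter
            (fun i => ∃ ℓ, i ∈ G ℓ ∧ IsIntS3 (∑ i' ∈ G ℓ, M i' e0.2)), M i e0.2) := by
          rw [← hsplit]; ring
        rw [heq]
        exact isIntS3_sub hbj hint1
      have he0T : e0.1 ∈ univ.filter
          (fun i => ¬ ∃ ℓ, i ∈ G ℓ ∧ IsIntS3 (∑ i' ∈ G ℓ, M i' e0.2)) :=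
        mem_filter.2 ⟨mem_univ _, hT⟩
      obtain ⟨i', hi'T, hi'ne, hi'frac⟩ := secondFracS3 he0T hTsum ((hmemfrac e0).1 he0)
      have hi'mem : (i', e0.2) ∈ frac := (hmemfrac _).2 hi'frac
      have hi'vert : vert (i', e0.2) = (e0.2, none) :=
        (hvert_none (i', e0.2)).2 (mem_filter.1 hi'T).2
      refine ⟨⟨e0, he0⟩, ⟨(i', e0.2), hi'mem⟩, ?_, Subtype.ext hv,
        Subtype.ext (show vert (i', e0.2) = ↑v by rw [hi'vert, ← hve, hv])⟩
      intro h
      have h2 := congrArg Subtype.val h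
      exact hi'ne (congrArg Prod.fst h2).symm
    · -- some case
      have hve : vert e0 = (e0.2, some ℓ) := Prod.ext (hvert_fst e0) ho
      obtain ⟨-, hmem, hint⟩ := (hvert_some e0 e0.2 ℓ).1 hve
      obtain ⟨i', hi'G, hi'ne, hi'frac⟩ := secondFracS3 hmem hint ((hmemfrac e0).1 he0)
      have hi'mem : (i', e0.2) ∈ frac := (hmemfrac _).2 hi'frac
      have hi'vert : vert (i', e0.2) = (e0.2, some ℓ) :=
        (hvert_some _ _ _).2 ⟨rfl, hi'G, hint⟩
      refine ⟨⟨e0, he0⟩, ⟨(i', e0.2), hi'mem⟩, ?_, Subtype.ext hv,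
        Subtype.ext (show vert (i', e0.2) = ↑v by rw [hi'vert, ← hve, hv])⟩
      intro h
      have h2 := congrArg Subtype.val h
      exact hi'ne (congrArg Prod.fst h2).symm
  obtain ⟨d, hdne, hdL, hdR⟩ := coreS3 fl fr hdl hdr
  set dd : Fin m × Fin q → ℝ := fun e => if h : e ∈ frac then d ⟨e, h⟩ else 0 with hdd_def
  have key : ∀ (P : Fin m × Fin q → Prop) [DecidablePred P],
      (∑ e : Fin m × Fin q, if P e then dd e else 0)
        = ∑ e ∈ univ.filter (fun e : {x // x ∈ frac} => P ↑e), d e := by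
    intro P _
    rw [hdd_def]
    exact sum_dite_subtypeS3 frac d P
  have hddL : ∀ i : Fin m, (∑ e : Fin m × Fin q, if e.1 = i then dd e else 0) = 0 := by
    intro i
    rw [key (fun e => e.1 = i)]
    by_cases hi : i ∈ frac.image Prod.fst
    · have heq : (univ.filter (fun e : {x // x ∈ frac} => (e : Fin m × Fin q).1 = i))
          = univ.filter (fun e => fl e = ⟨i, hi⟩) := by
        refine Finset.filter_congr (fun e _ => ?_)
        rw [hfl_def]
        simp [Subtype.ext_iff]
      rw [heq]
      exact hdL ⟨i, hi⟩
    · refine Finset.sum_eq_zero (fun e he => ?_)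
      exact absurd ((mem_filter.1 he).2 ▸ mem_image_of_mem Prod.fst e.2) hi
  have hddR : ∀ v : Fin q × Option (Fin p),
      (∑ e : Fin m × Fin q, if vert e = v then dd e else 0) = 0 := by
    intro v
    rw [key (fun e => vert e = v)]
    by_cases hv : v ∈ frac.image vert
    · have heq : (univ.filter (fun e : {x // x ∈ frac} => vert (e : Fin m × Fin q) = v))
          = univ.filter (fun e => fr e = ⟨v, hv⟩) := by
        refine Finset.filter_congr (fun e _ => ?_)
        rw [hfr_def]
        simp [Subtype.ext_iff]
      rw [heq]
      exact hdR ⟨v, hv⟩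
    · refine Finset.sum_eq_zero (fun e he => ?_)
      exact absurd ((mem_filter.1 he).2 ▸ mem_image_of_mem vert e.2) hv
  -- row sums of dd vanish
  have hrowD : ∀ i, ∑ j : Fin q, dd (i, j) = 0 := by
    intro i
    have h1 : (∑ e : Fin m × Fin q, if e.1 = i then dd e else 0) = ∑ j : Fin q, dd (i, j) := by
      rw [Fintype.sum_prod_type]
      rw [show (∑ a : Fin m, ∑ b : Fin q, if (a, b).1 = i then dd (a, b) else 0)
          = ∑ a : Fin m, if a = i then (∑ b : Fin q, dd (a, b)) else 0 from
        Finset.sum_congr rfl (fun a _ => by by_cases h : a = i <;> simp [h])]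
      exact Fintype.sum_ite_eq' i _
    rw [← h1, hddL i]
  -- column sums of dd vanish
  have hcolD : ∀ j, ∑ i : Fin m, dd (i, j) = 0 := by
    intro j
    have h1 : (∑ e : Fin m × Fin q, if e.2 = j then dd e else 0) = ∑ i : Fin m, dd (i, j) := by
      rw [Fintype.sum_prod_type]
      exact Finset.sum_congr rfl (fun a _ => Fintype.sum_ite_eq' j _)
    have h2 : (∑ e : Fin m × Fin q, if e.2 = j then dd e else 0)
        = ∑ o : Option (Fin p), ∑ e : Fin m × Fin q, if vert e = (j, o) then dd e else 0 := by
      rw [Finset.sum_comm]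
      refine Finset.sum_congr rfl (fun e _ => ?_)
      by_cases he : e.2 = j
      · rw [if_pos he]
        have hcong : ∀ o : Option (Fin p), (vert e = (j, o)) ↔ ((vert e).2 = o) := by
          intro o; rw [Prod.ext_iff, hvert_fst, he]; simp
        calc dd e = ∑ o : Option (Fin p), if (vert e).2 = o then dd e else 0 :=
              (Fintype.sum_ite_eq (vert e).2 fun _ => dd e).symm
          _ = ∑ o : Option (Fin p), if vert e = (j, o) then dd e else 0 :=
              Finset.sum_congr rfl (fun o _ => (if_congr (hcong o) rfl rfl).symm)
      · rw [if_neg he]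
        refine (Finset.sum_eq_zero (fun o _ => ?_)).symm
        rw [if_neg]
        intro hveq
        exact he (by rw [← hvert_fst e, hveq])
    rw [← h1, h2]
    exact Finset.sum_eq_zero (fun o _ => hddR (j, o))
  -- group sums of dd vanish on integral cells
  have hcellD : ∀ (j : Fin q) (ℓ : Fin p), IsIntS3 (∑ i ∈ G ℓ, M i j) →
      ∑ i ∈ G ℓ, dd (i, j) = 0 := by
    intro j ℓ hint
    have h1 : (∑ e : Fin m × Fin q, if vert e = (j, some ℓ) then dd e else 0)
        = ∑ i ∈ G ℓ, dd (i, j) := by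
      rw [show (∑ e : Fin m × Fin q, if vert e = (j, some ℓ) then dd e else 0)
          = ∑ e : Fin m × Fin q, if e.2 = j ∧ e.1 ∈ G ℓ then dd e else 0 from
        Finset.sum_congr rfl (fun e _ => if_congr ?_ rfl rfl)]
      · rw [Fintype.sum_prod_type]
        rw [show (∑ a : Fin m, ∑ bb : Fin q, if (a, bb).2 = j ∧ (a, bb).1 ∈ G ℓ
              then dd (a, bb) else 0)
            = ∑ a : Fin m, if a ∈ G ℓ then dd (a, j) else 0 from
          Finset.sum_congr rfl (fun a _ => by
            by_cases ha : a ∈ G ℓ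
            · simp only [ha, and_true, if_true]
              exact Fintype.sum_ite_eq' j _
            · simp [ha])]
        rw [Finset.sum_ite_mem, Finset.univ_inter]
      · rw [hvert_some e j ℓ]
        constructor
        · rintro ⟨ha, hb, -⟩; exact ⟨ha, hb⟩
        · rintro ⟨ha, hb⟩; exact ⟨ha, hb, by rw [ha]; exact hint⟩
    rw [← h1]
    exact hddR (j, some ℓ)
  -- the perturbation matrix
  set D : Matrix (Fin m) (Fin q) ℝ := Matrix.of (fun i j => dd (i, j)) with hD_def
  have hev1 : ∀ᶠ ε in nhdsWithin (0:ℝ) (Set.Ioi 0), ∀ e : Fin m × Fin q,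
      (0 ≤ M e.1 e.2 + ε * dd e ∧ M e.1 e.2 + ε * dd e ≤ 1) ∧
      (0 ≤ M e.1 e.2 - ε * dd e ∧ M e.1 e.2 - ε * dd e ≤ 1) := by
    rw [Filter.eventually_all]
    intro e
    by_cases he : e ∈ frac
    · obtain ⟨h0, h1⟩ := hfrac_lt e he
      filter_upwards [evS3_gt h0 (dd e), evS3_lt h1 (dd e),
        evS3_gt h0 (-dd e), evS3_lt h1 (-dd e)] with ε b1 b2 b3 b4
      rw [mul_neg] at b3 b4
      exact ⟨⟨le_of_lt b1, le_of_lt b2⟩, ⟨by linarith, by linarith⟩⟩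
    · have hz : dd e = 0 := by rw [hdd_def]; exact dif_neg he
      refine Filter.Eventually.of_forall (fun ε => ?_)
      rw [hz]
      obtain ⟨h0, h1⟩ := hbox e.1 e.2
      constructor <;> constructor <;> linarith
  have hev2 : ∀ᶠ ε in nhdsWithin (0:ℝ) (Set.Ioi 0), ∀ jl : Fin q × Fin p,
      ((L jl.1 jl.2 : ℝ) ≤ (∑ i ∈ G jl.2, M i jl.1) + ε * (∑ i ∈ G jl.2, dd (i, jl.1)) ∧
       (∑ i ∈ G jl.2, M i jl.1) + ε * (∑ i ∈ G jl.2, dd (i, jl.1)) ≤ (U jl.1 jl.2 : ℝ)) ∧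
      ((L jl.1 jl.2 : ℝ) ≤ (∑ i ∈ G jl.2, M i jl.1) - ε * (∑ i ∈ G jl.2, dd (i, jl.1)) ∧
       (∑ i ∈ G jl.2, M i jl.1) - ε * (∑ i ∈ G jl.2, dd (i, jl.1)) ≤ (U jl.1 jl.2 : ℝ)) := by
    rw [Filter.eventually_all]
    rintro ⟨j, ℓ⟩
    obtain ⟨hL, hU⟩ := hgrp j ℓ
    by_cases hint : IsIntS3 (∑ i ∈ G ℓ, M i j)
    · have hz := hcellD j ℓ hint
      refine Filter.Eventually.of_forall (fun ε => ?_)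
      dsimp only
      rw [hz]
      constructor <;> constructor <;> linarith
    · have hLlt : (L j ℓ : ℝ) < ∑ i ∈ G ℓ, M i j :=
        hL.lt_of_ne (fun h => hint ⟨L j ℓ, h.symm⟩)
      have hUlt : (∑ i ∈ G ℓ, M i j) < (U j ℓ : ℝ) :=
        hU.lt_of_ne (fun h => hint ⟨U j ℓ, h⟩)
      filter_upwards [evS3_gt hLlt (∑ i ∈ G ℓ, dd (i, j)),
        evS3_lt hUlt (∑ i ∈ G ℓ, dd (i, j)),
        evS3_gt hLlt (-(∑ i ∈ G ℓ, dd (i, j))),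
        evS3_lt hUlt (-(∑ i ∈ G ℓ, dd (i, j)))] with ε b1 b2 b3 b4
      rw [mul_neg] at b3 b4
      exact ⟨⟨le_of_lt b1, le_of_lt b2⟩, ⟨by linarith, by linarith⟩⟩
  obtain ⟨ε, hε0, hε1, hε2⟩ :=
    ((eventually_mem_nhdsWithin).and (hev1.and hev2)).exists
  have hε0' : (0:ℝ) < ε := hε0
  -- entries of perturbed matrices
  have hentryP : ∀ i j, (M + ε • D) i j = M i j + ε * dd (i, j) := by
    intro i j
    simp [hD_def, Matrix.add_apply, Matrix.smul_apply, smul_eq_mul]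
  have hentryN : ∀ i j, (M - ε • D) i j = M i j - ε * dd (i, j) := by
    intro i j
    simp [hD_def, Matrix.sub_apply, Matrix.smul_apply, smul_eq_mul]
  have hmemP : (M + ε • D) ∈
      {M : Matrix (Fin m) (Fin q) ℝ |
          (∀ i j, 0 ≤ M i j ∧ M i j ≤ 1) ∧
          (∀ i, ∑ j, M i j = 1) ∧
          (∀ j, ∑ i, M i j = (b j : ℝ)) ∧
          (∀ (j : Fin q) (ℓ : Fin p),
            (L j ℓ : ℝ) ≤ (∑ i ∈ G ℓ, M i j) ∧ (∑ i ∈ G ℓ, M i j) ≤ (U j ℓ : ℝ))} := by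
    refine ⟨fun i j => ?_, fun i => ?_, fun j => ?_, fun j ℓ => ?_⟩
    · rw [hentryP]
      exact (hε1 (i, j)).1
    · rw [Finset.sum_congr rfl (fun j _ => hentryP i j), Finset.sum_add_distrib,
        hrow i, ← Finset.mul_sum, hrowD i, mul_zero, add_zero]
    · rw [Finset.sum_congr rfl (fun i _ => hentryP i j), Finset.sum_add_distrib,
        hcol j, ← Finset.mul_sum, hcolD j, mul_zero, add_zero]
    · rw [Finset.sum_congr rfl (fun i _ => hentryP i j), Finset.sum_add_distrib,
        ← Finset.mul_sum]
      exact (hε2 (j, ℓ)).1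
  have hmemN : (M - ε • D) ∈
      {M : Matrix (Fin m) (Fin q) ℝ |
          (∀ i j, 0 ≤ M i j ∧ M i j ≤ 1) ∧
          (∀ i, ∑ j, M i j = 1) ∧
          (∀ j, ∑ i, M i j = (b j : ℝ)) ∧
          (∀ (j : Fin q) (ℓ : Fin p),
            (L j ℓ : ℝ) ≤ (∑ i ∈ G ℓ, M i j) ∧ (∑ i ∈ G ℓ, M i j) ≤ (U j ℓ : ℝ))} := by
    refine ⟨fun i j => ?_, fun i => ?_, fun j => ?_, fun j ℓ => ?_⟩
    · rw [hentryN]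
      exact (hε1 (i, j)).2
    · rw [Finset.sum_congr rfl (fun j _ => hentryN i j), Finset.sum_sub_distrib,
        hrow i, ← Finset.mul_sum, hrowD i, mul_zero, sub_zero]
    · rw [Finset.sum_congr rfl (fun i _ => hentryN i j), Finset.sum_sub_distrib,
        hcol j, ← Finset.mul_sum, hcolD j, mul_zero, sub_zero]
    · rw [Finset.sum_congr rfl (fun i _ => hentryN i j), Finset.sum_sub_distrib,
        ← Finset.mul_sum]
      exact (hε2 (j, ℓ)).2
  have hseg : M ∈ openSegment ℝ (M - ε • D) (M + ε • D) := by
    refine ⟨1/2, 1/2, by norm_num, by norm_num, by norm_num, ?_⟩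
    module
  have hfix := hMext (M - ε • D) hmemN (M + ε • D) hmemP hseg
  have hD0 : ε • D = 0 := by
    have h := hfix.2
    rwa [add_eq_left] at h
  have hDz : D = 0 := by
    rcases smul_eq_zero.1 hD0 with h | h
    · exact absurd h (ne_of_gt hε0')
    · exact h
  obtain ⟨e, he⟩ := Function.ne_iff.1 hdne
  apply he
  have hdd0 : dd (e : Fin m × Fin q) = 0 := by
    have h := congrFun (congrFun hDz (e : Fin m × Fin q).1) (e : Fin m × Fin q).2
    simpa [hD_def] using h
  rw [hdd_def] at hdd0
  simp only [dif_pos e.2] at hdd0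
  simpa using hdd0
end

section
/- Let G_1,…,G_p be pairwise disjoint subsets of {1,…,m}, let b_1,…,b_q be positive integers with b_1 + … + b_q = m, and let L,U ∈ ℤ^{q×p}. Every matrix M ∈ [0,1]^{m×q} satisfying (i) Σ_j M_{ij} = 1 for every i ∈ [m], (ii) Σ_i M_{ij} = b_j for every j ∈ [q], and (iii) L_{jℓ} ≤ Σ_{i∈G_ℓ} M_{ij} ≤ U_{jℓ} for every j ∈ [q] and ℓ ∈ [p], can be written as a finite convex combination M = Σ_t α_t M_t (with α_t ≥ 0 and Σ_t α_t = 1) in which every M_t ∈ {0,1}^{m×q} itself satisfies conditions (i), (ii) and (iii). -/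
open Finset
set_option maxHeartbeats 1000000


def IsInt (x : ℝ) : Prop := ∃ n : ℤ, x = (n : ℝ)

lemma isInt_sum {α : Type*} (s : Finset α) (f : α → ℝ) (h : ∀ a ∈ s, IsInt (f a)) :
    IsInt (∑ a ∈ s, f a) := by
  classical
  induction s using Finset.induction_on with
  | empty => exact ⟨0, by simp⟩
  | @insert a s' hx ih =>
    obtain ⟨n, hn⟩ := h a (by simp)
    obtain ⟨k, hk⟩ := ih fun b hb => h b (by simp [hb])
    exact ⟨n + k, by rw [Finset.sum_insert hx, hn, hk]; push_cast; ring⟩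

lemma isInt_sub {x y : ℝ} (hx : IsInt x) (hy : IsInt y) : IsInt (x - y) := by
  obtain ⟨n, rfl⟩ := hx; obtain ⟨k, rfl⟩ := hy; exact ⟨n - k, by push_cast; ring⟩

lemma exists_second_frac {α : Type*} [DecidableEq α] (s : Finset α) (f : α → ℝ)
    (hs : IsInt (∑ a ∈ s, f a)) (a₀ : α) (ha₀ : a₀ ∈ s) (hf : ¬ IsInt (f a₀)) :
    ∃ a₁ ∈ s, a₁ ≠ a₀ ∧ ¬ IsInt (f a₁) := by
  by_contra hcon
  push_neg at hcon
  have herase : IsInt (∑ a ∈ s.erase a₀, f a) := by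
    refine isInt_sum _ _ fun a ha => ?_
    exact hcon a (Finset.mem_of_mem_erase ha) (Finset.ne_of_mem_erase ha)
  have : f a₀ = (∑ a ∈ s, f a) - ∑ a ∈ s.erase a₀, f a := by
    rw [← Finset.add_sum_erase s f ha₀]; ring
  exact hf (this ▸ isInt_sub hs herase)

open scoped Classical in
noncomputable def grp {m p : ℕ} (G : Fin p → Finset (Fin m)) (i : Fin m) : Option (Fin p) :=
  if h : ∃ ℓ, i ∈ G ℓ then some (Classical.choose h) else none

lemma grp_mem {m p : ℕ} {G : Fin p → Finset (Fin m)} {i : Fin m} {ℓ : Fin p}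
    (h : grp G i = some ℓ) : i ∈ G ℓ := by
  classical
  unfold grp at h
  split_ifs at h with h'
  · obtain rfl : Classical.choose h' = ℓ := by simpa using h
    exact Classical.choose_spec h'

lemma grp_eq {m p : ℕ} {G : Fin p → Finset (Fin m)}
    (hG : ∀ ℓ ℓ' : Fin p, ℓ ≠ ℓ' → Disjoint (G ℓ) (G ℓ'))
    {i : Fin m} {ℓ : Fin p} (h : i ∈ G ℓ) : grp G i = some ℓ := by
  classical
  unfold grp
  have h' : ∃ ℓ', i ∈ G ℓ' := ⟨ℓ, h⟩
  rw [dif_pos h']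
  congr 1
  by_contra hne
  exact (Finset.disjoint_left.mp (hG _ _ hne) (Classical.choose_spec h') h)

open scoped Classical in
noncomputable def mid {m q p : ℕ} (G : Fin p → Finset (Fin m))
    (M : Matrix (Fin m) (Fin q) ℝ) (i : Fin m) (j : Fin q) : Option (Fin p) :=
  match grp G i with
  | none => none
  | some ℓ => if IsInt (∑ i' ∈ G ℓ, M i' j) then some ℓ else none

lemma mid_eq_some {m q p : ℕ} {G : Fin p → Finset (Fin m)}
    {M : Matrix (Fin m) (Fin q) ℝ} {i : Fin m} {j : Fin q} {ℓ : Fin p} :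
    mid G M i j = some ℓ ↔ grp G i = some ℓ ∧ IsInt (∑ i' ∈ G ℓ, M i' j) := by
  classical
  unfold mid
  rcases hg : grp G i with _ | ℓ'
  · simp
  · by_cases hI : IsInt (∑ i' ∈ G ℓ', M i' j) <;> simp [hI] <;> aesop

lemma mid_of_mem {m q p : ℕ} {G : Fin p → Finset (Fin m)}
    (hG : ∀ ℓ ℓ' : Fin p, ℓ ≠ ℓ' → Disjoint (G ℓ) (G ℓ'))
    {M : Matrix (Fin m) (Fin q) ℝ} {i : Fin m} {j : Fin q} {ℓ : Fin p}
    (h : i ∈ G ℓ) (hI : IsInt (∑ i' ∈ G ℓ, M i' j)) : mid G M i j = some ℓ :=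
  mid_eq_some.mpr ⟨grp_eq hG h, hI⟩

lemma fiber_some {m q p : ℕ} {G : Fin p → Finset (Fin m)}
    (hG : ∀ ℓ ℓ' : Fin p, ℓ ≠ ℓ' → Disjoint (G ℓ) (G ℓ'))
    {M : Matrix (Fin m) (Fin q) ℝ} {j : Fin q} {ℓ : Fin p}
    (hI : IsInt (∑ i' ∈ G ℓ, M i' j)) [DecidableEq (Option (Fin p))]
    [DecidablePred fun i => mid G M i j = some ℓ] :
    (Finset.univ.filter fun i => mid G M i j = some ℓ) = G ℓ := by
  ext i
  simp only [Finset.mem_filter, Finset.mem_univ, true_and]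
  constructor
  · intro h; exact grp_mem (mid_eq_some.mp h).1
  · intro h; exact mid_of_mem hG h hI

lemma two_le_card_of_pair {α : Type*} {s : Finset α} {a b : α}
    (ha : a ∈ s) (hb : b ∈ s) (hab : a ≠ b) : 2 ≤ s.card :=
  Finset.one_lt_card.mpr ⟨a, ha, b, hb, hab⟩

lemma exists_direction {m q p : ℕ} (G : Fin p → Finset (Fin m))
    (hG : ∀ ℓ ℓ' : Fin p, ℓ ≠ ℓ' → Disjoint (G ℓ) (G ℓ'))
    (b : Fin q → ℕ)
    (M : Matrix (Fin m) (Fin q) ℝ)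
    (hrow : ∀ i, ∑ j, M i j = 1)
    (hcol : ∀ j, ∑ i, M i j = (b j : ℝ))
    (hfrac : ∃ i j, ¬ IsInt (M i j)) :
    ∃ C : Matrix (Fin m) (Fin q) ℝ,
      (∀ i j, IsInt (M i j) → C i j = 0) ∧
      (∀ i, ∑ j, C i j = 0) ∧
      (∀ j, ∑ i, C i j = 0) ∧
      (∀ j ℓ, IsInt (∑ i ∈ G ℓ, M i j) → ∑ i ∈ G ℓ, C i j = 0) ∧
      (∃ i j, ¬ IsInt (M i j) ∧ C i j ≠ 0) := by
  classical
  set E : Finset (Fin m × Fin q) := univ.filter (fun e => ¬ IsInt (M e.1 e.2)) with hE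
  have memE : ∀ e : Fin m × Fin q, e ∈ E ↔ ¬ IsInt (M e.1 e.2) := fun e => by simp [hE]
  set nd : (Fin m × Fin q) → Fin q × Option (Fin p) :=
    (fun e => (e.2, mid G M e.1 e.2)) with hnd
  set R : Finset (Fin m) := E.image Prod.fst with hR
  set Md : Finset (Fin q × Option (Fin p)) := E.image nd with hMd
  -- fibers of `mid · j` sum to integers
  have hfibint : ∀ (j : Fin q) (o : Option (Fin p)),
      IsInt (∑ i ∈ univ.filter (fun i => mid G M i j = o), M i j) := by
    intro j o
    have hsome : ∀ ℓ : Fin p,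
        IsInt (∑ i ∈ univ.filter (fun i => mid G M i j = some ℓ), M i j) := by
      intro ℓ
      by_cases hne : (univ.filter (fun i => mid G M i j = some ℓ)).Nonempty
      · obtain ⟨i₀, hi₀⟩ := hne
        have hmid : mid G M i₀ j = some ℓ := (Finset.mem_filter.mp hi₀).2
        have hI : IsInt (∑ i' ∈ G ℓ, M i' j) := (mid_eq_some.mp hmid).2
        rw [fiber_some hG hI]
        exact hI
      · rw [Finset.not_nonempty_iff_eq_empty.mp hne]
        exact ⟨0, by simp⟩
    rcases o with _ | ℓ
    · -- the `none` fiber: b j minus the other fibers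
      have hpart : ∑ o' : Option (Fin p),
          ∑ i ∈ univ.filter (fun i => mid G M i j = o'), M i j = (b j : ℝ) := by
        rw [Finset.sum_fiberwise univ (fun i => mid G M i j) (fun i => M i j)]
        exact hcol j
      rw [Fintype.sum_option] at hpart
      have : ∑ i ∈ univ.filter (fun i => mid G M i j = none), M i j
          = (b j : ℝ) - ∑ ℓ : Fin p,
              ∑ i ∈ univ.filter (fun i => mid G M i j = some ℓ), M i j := by
        linarith
      rw [this]
      exact isInt_sub ⟨b j, by push_cast; ring⟩ (isInt_sum _ _ fun ℓ _ => hsome ℓ)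
    · exact hsome ℓ
  -- row degrees ≥ 2
  have hrowdeg : ∀ r ∈ R, 2 ≤ (E.filter (fun e => e.1 = r)).card := by
    intro r hr
    obtain ⟨e₀, he₀, he₀r⟩ := Finset.mem_image.mp hr
    have hfr : ¬ IsInt (M r e₀.2) := by
      have := (memE e₀).mp he₀; rwa [he₀r] at this
    obtain ⟨j₁, _, hj₁ne, hj₁fr⟩ :=
      exists_second_frac (univ : Finset (Fin q)) (fun j => M r j)
        (by rw [hrow r]; exact ⟨1, by norm_num⟩) e₀.2 (mem_univ _) hfr
    refine two_le_card_of_pair (a := (r, e₀.2)) (b := (r, j₁)) ?_ ?_ ?_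
    · exact Finset.mem_filter.mpr ⟨(memE _).mpr hfr, rfl⟩
    · exact Finset.mem_filter.mpr ⟨(memE _).mpr hj₁fr, rfl⟩
    · simp [Prod.ext_iff, (Ne.symm hj₁ne)]
  -- mid-node degrees ≥ 2
  have hmiddeg : ∀ v ∈ Md, 2 ≤ (E.filter (fun e => nd e = v)).card := by
    intro v hv
    obtain ⟨e₀, he₀, he₀v⟩ := Finset.mem_image.mp hv
    obtain ⟨i₀, j⟩ := e₀
    obtain ⟨hj, hmid⟩ : v.1 = j ∧ mid G M i₀ j = v.2 := by
      rw [hnd] at he₀v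
      exact ⟨(Prod.ext_iff.mp he₀v).1.symm, (Prod.ext_iff.mp he₀v).2⟩
    have hfr : ¬ IsInt (M i₀ j) := (memE _).mp he₀
    have hi₀mem : i₀ ∈ univ.filter (fun i => mid G M i j = v.2) :=
      Finset.mem_filter.mpr ⟨mem_univ _, hmid⟩
    obtain ⟨i₁, hi₁mem, hi₁ne, hi₁fr⟩ :=
      exists_second_frac (univ.filter (fun i => mid G M i j = v.2)) (fun i => M i j)
        (hfibint j v.2) i₀ hi₀mem hfr
    have hmid₁ : mid G M i₁ j = v.2 := (Finset.mem_filter.mp hi₁mem).2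
    refine two_le_card_of_pair (a := (i₀, j)) (b := (i₁, j)) ?_ ?_ ?_
    · refine Finset.mem_filter.mpr ⟨(memE _).mpr hfr, ?_⟩
      rw [hnd]
      show (j, mid G M i₀ j) = v
      rw [hmid, ← hj]
    · refine Finset.mem_filter.mpr ⟨(memE _).mpr hi₁fr, ?_⟩
      rw [hnd]
      show (j, mid G M i₁ j) = v
      rw [hmid₁, ← hj]
    · simp [Prod.ext_iff, hi₁ne.symm]  -- need (i₀,j) ≠ (i₁,j)
  -- cardinality count
  have hcount : R.card + Md.card ≤ E.card := by
    have h1 : E.card = ∑ r ∈ R, (E.filter (fun e => e.1 = r)).card :=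
      Finset.card_eq_sum_card_fiberwise (fun e he => Finset.mem_image_of_mem _ he)
    have h2 : E.card = ∑ v ∈ Md, (E.filter (fun e => nd e = v)).card :=
      Finset.card_eq_sum_card_fiberwise (fun e he => Finset.mem_image_of_mem _ he)
    have h1' : 2 * R.card ≤ E.card := by
      rw [h1]
      calc 2 * R.card = ∑ _r ∈ R, 2 := by rw [Finset.sum_const, smul_eq_mul, mul_comm]
        _ ≤ _ := Finset.sum_le_sum hrowdeg
    have h2' : 2 * Md.card ≤ E.card := by
      rw [h2]
      calc 2 * Md.card = ∑ _v ∈ Md, 2 := by rw [Finset.sum_const, smul_eq_mul, mul_comm]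
        _ ≤ _ := Finset.sum_le_sum hmiddeg
    omega
  -- linear algebra: find a nonzero kernel element
  have hEne : E.Nonempty := by
    obtain ⟨i, j, h⟩ := hfrac; exact ⟨(i, j), (memE (i, j)).mpr h⟩
  obtain ⟨e₀, he₀⟩ := hEne
  have he₀R : e₀.1 ∈ R := Finset.mem_image_of_mem _ he₀
  set A : Matrix ({x // x ∈ R} ⊕ {x // x ∈ Md}) {x // x ∈ E} ℝ :=
    fun v e => Sum.elim
      (fun r : {x // x ∈ R} => if (e : Fin m × Fin q).1 = (r : Fin m) then (1:ℝ) else 0)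
      (fun w : {x // x ∈ Md} => if nd (e : Fin m × Fin q) = (w : Fin q × Option (Fin p)) then (1:ℝ) else 0) v
    with hA
  set φ : ({x // x ∈ E} → ℝ) →ₗ[ℝ] (({x // x ∈ R} ⊕ {x // x ∈ Md}) → ℝ) := A.mulVecLin with hφ
  set c : ({x // x ∈ R} ⊕ {x // x ∈ Md}) → ℝ := Sum.elim (fun _ => 1) (fun _ => -1) with hc
  set g : (({x // x ∈ R} ⊕ {x // x ∈ Md}) → ℝ) →ₗ[ℝ] ℝ :=
    { toFun := fun y => ∑ v, c v * y v
      map_add' := fun y z => by simp [mul_add, Finset.sum_add_distrib]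
      map_smul' := fun a y => by
        simp only [smul_eq_mul, RingHom.id_apply, Pi.smul_apply]
        rw [Finset.mul_sum]
        exact Finset.sum_congr rfl fun v _ => by ring } with hg
  have hgapp : ∀ y, g y = ∑ v, c v * y v := fun _ => rfl
  have hφapp : ∀ (x' : {x // x ∈ E} → ℝ) v, (φ x') v = ∑ e : {x // x ∈ E}, A v e * x' e := by
    intro x' v
    simp [hφ, Matrix.mulVecLin_apply, Matrix.mulVec, dotProduct]
  have hrangele : LinearMap.range φ ≤ LinearMap.ker g := by
    rintro yval ⟨x', rfl⟩
    rw [LinearMap.mem_ker]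
    show ∑ v, c v * (φ x') v = 0
    have hpiece1 : ∑ r : {x // x ∈ R}, (φ x') (Sum.inl r) = ∑ e : {x // x ∈ E}, x' e := by
      simp only [hφapp]
      rw [Finset.sum_comm]
      refine Finset.sum_congr rfl fun e _ => ?_
      have h1 : ∑ r : {x // x ∈ R}, A (Sum.inl r) e * x' e
          = ∑ a ∈ R, (if (e : Fin m × Fin q).1 = a then x' e else 0) := by
        rw [← Finset.sum_coe_sort R (fun a => if (e : Fin m × Fin q).1 = a then x' e else 0)]
        refine Finset.sum_congr rfl fun r _ => ?_
        simp [hA, ite_mul]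
      rw [h1, Finset.sum_ite_eq, if_pos (Finset.mem_image_of_mem _ e.2)]
    have hpiece2 : ∑ w : {x // x ∈ Md}, (φ x') (Sum.inr w) = ∑ e : {x // x ∈ E}, x' e := by
      simp only [hφapp]
      rw [Finset.sum_comm]
      refine Finset.sum_congr rfl fun e _ => ?_
      have h1 : ∑ w : {x // x ∈ Md}, A (Sum.inr w) e * x' e
          = ∑ a ∈ Md, (if nd (e : Fin m × Fin q) = a then x' e else 0) := by
        rw [← Finset.sum_coe_sort Md (fun a => if nd (e : Fin m × Fin q) = a then x' e else 0)]
        refine Finset.sum_congr rfl fun w _ => ?_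
        simp [hA, ite_mul]
      rw [h1, Finset.sum_ite_eq, if_pos (Finset.mem_image_of_mem _ e.2)]
    rw [Fintype.sum_sum_type]
    have hl : ∀ r : {x // x ∈ R}, c (Sum.inl r) * (φ x') (Sum.inl r) = (φ x') (Sum.inl r) := by
      intro r; simp [hc]
    have hr' : ∀ w : {x // x ∈ Md}, c (Sum.inr w) * (φ x') (Sum.inr w) = -((φ x') (Sum.inr w)) := by
      intro w; simp [hc]
    simp only [hl, hr']
    rw [Finset.sum_neg_distrib, hpiece1, hpiece2]
    ring
  have hgne : g ≠ 0 := by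
    intro h0
    classical
    set y₀ : ({x // x ∈ R} ⊕ {x // x ∈ Md}) → ℝ :=
      fun v => if v = Sum.inl ⟨e₀.1, he₀R⟩ then (1:ℝ) else 0 with hy₀
    have h2 : g y₀ = 1 := by
      rw [hgapp, Finset.sum_eq_single (Sum.inl ⟨e₀.1, he₀R⟩)]
      · simp [hc, hy₀]
      · intro v _ hne; simp [hy₀, hne]
      · intro h; exact absurd (Finset.mem_univ _) h
    rw [h0] at h2
    simp at h2
  have hkerne : LinearMap.ker φ ≠ ⊥ := by
    intro hbot
    have hd1 : Module.finrank ℝ ({x // x ∈ E} → ℝ) = E.card := by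
      rw [Module.finrank_fintype_fun_eq_card, Fintype.card_coe]
    have hd2 : Module.finrank ℝ (({x // x ∈ R} ⊕ {x // x ∈ Md}) → ℝ) = R.card + Md.card := by
      rw [Module.finrank_fintype_fun_eq_card, Fintype.card_sum, Fintype.card_coe, Fintype.card_coe]
    have hkerg_lt : Module.finrank ℝ (LinearMap.ker g) < R.card + Md.card := by
      rw [← hd2]
      exact Submodule.finrank_lt (fun h => hgne (LinearMap.ker_eq_top.mp h))
    have hrange_le : Module.finrank ℝ (LinearMap.range φ) ≤ Module.finrank ℝ (LinearMap.ker g) :=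
      Submodule.finrank_mono hrangele
    have hsum := LinearMap.finrank_range_add_finrank_ker φ
    rw [hd1] at hsum
    have hker0 : Module.finrank ℝ (LinearMap.ker φ) = 0 := by rw [hbot]; exact finrank_bot ℝ _
    omega
  obtain ⟨x, hxker, hxne⟩ := (Submodule.ne_bot_iff _).mp hkerne
  have hker : ∀ v, ∑ e : {x // x ∈ E}, A v e * x e = 0 := by
    intro v
    have h := LinearMap.mem_ker.mp hxker
    have h2 := congrFun h v
    rw [hφapp] at h2
    exact h2
  -- build C
  set xb : Fin m × Fin q → ℝ := fun e => if h : e ∈ E then x ⟨e, h⟩ else 0 with hxb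
  set C : Matrix (Fin m) (Fin q) ℝ := fun i j => xb (i, j) with hC
  have hxbE : ∀ (e : {x // x ∈ E}), xb (e : Fin m × Fin q) = x e := by
    intro e; simp [hxb, e.2]
  have htrans : ∀ (f : Fin m × Fin q → Prop) (_ : DecidablePred f),
      ∑ e : {x // x ∈ E}, (if f (e : Fin m × Fin q) then x e else 0)
        = ∑ e ∈ univ.filter f, xb e := by
    intro f hf
    calc ∑ e : {x // x ∈ E}, (if f (e : Fin m × Fin q) then x e else 0)
        = ∑ e : {x // x ∈ E}, (if f (e : Fin m × Fin q) then xb (e : Fin m × Fin q) else 0) := by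
          refine Finset.sum_congr rfl fun e _ => ?_; rw [hxbE]
      _ = ∑ e ∈ E, (if f e then xb e else 0) :=
          Finset.sum_coe_sort E (fun e => if f e then xb e else 0)
      _ = ∑ e ∈ univ, (if f e then xb e else 0) :=
          Finset.sum_subset (Finset.subset_univ E) (fun e _ he => by simp [hxb, he])
      _ = ∑ e ∈ univ.filter f, xb e := (Finset.sum_filter f xb).symm
  -- row sums of C vanish
  have hrowC : ∀ i, ∑ j, C i j = 0 := by
    intro i
    by_cases hiR : i ∈ R
    · have h0 := hker (Sum.inl ⟨i, hiR⟩)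
      have h1 : ∑ e : {x // x ∈ E}, (if (e : Fin m × Fin q).1 = i then x e else 0) = 0 := by
        refine Eq.trans ?_ h0
        refine Finset.sum_congr rfl fun e _ => ?_
        simp [hA, ite_mul]
      have h1' : ∑ e ∈ univ.filter (fun e : Fin m × Fin q => e.1 = i), xb e = 0 :=
        (htrans (fun e => e.1 = i) (by infer_instance)).symm.trans h1
      rw [← h1', Finset.sum_filter, Fintype.sum_prod_type]
      have hpull : ∀ i' : Fin m,
          (∑ j, if (i' = i) then xb (i', j) else 0) = if i' = i then (∑ j, xb (i', j)) else 0 := by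
        intro i'; split_ifs <;> simp
      simp only [hpull]
      rw [Finset.sum_ite_eq' univ i (fun i' => ∑ j, xb (i', j)), if_pos (Finset.mem_univ i)]
    · refine Finset.sum_eq_zero fun j _ => ?_
      have hniE : (i, j) ∉ E := fun h => hiR (Finset.mem_image_of_mem Prod.fst h)
      simp [hC, hxb, hniE]
  -- node sums of C vanish
  have hnodesum : ∀ (j : Fin q) (o : Option (Fin p)),
      ∑ i ∈ univ.filter (fun i => mid G M i j = o), C i j = 0 := by
    intro j o
    by_cases hv : (j, o) ∈ Md
    · have h0 := hker (Sum.inr ⟨(j, o), hv⟩)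
      have h1 : ∑ e : {x // x ∈ E}, (if nd (e : Fin m × Fin q) = (j, o) then x e else 0) = 0 := by
        refine Eq.trans ?_ h0
        refine Finset.sum_congr rfl fun e _ => ?_
        simp [hA, ite_mul]
      have h1' : ∑ e ∈ univ.filter (fun e : Fin m × Fin q => nd e = (j, o)), xb e = 0 :=
        (htrans (fun e => nd e = (j, o)) (by infer_instance)).symm.trans h1
      rw [← h1', Finset.sum_filter, Finset.sum_filter, Fintype.sum_prod_type]
      refine (Finset.sum_congr rfl fun i' _ => ?_).symm
      rw [Finset.sum_eq_single_of_mem j (Finset.mem_univ j)]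
      · simp [hnd, Prod.ext_iff, hC]
      · intro j' _ hj'ne
        simp [hnd, Prod.ext_iff, hj'ne]
    · refine Finset.sum_eq_zero fun i hi => ?_
      have hmidi : mid G M i j = o := (Finset.mem_filter.mp hi).2
      by_contra hCne
      have hiE : (i, j) ∈ E := by
        by_contra hnE; exact hCne (by simp [hC, hxb, hnE])
      refine hv ?_
      rw [hMd]
      refine Finset.mem_image.mpr ⟨(i, j), hiE, ?_⟩
      rw [hnd]
      show ((j, mid G M i j) : Fin q × Option (Fin p)) = (j, o)
      rw [hmidi]
  refine ⟨C, ?_, hrowC, ?_, ?_, ?_⟩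
  · intro i j hint
    have hniE : (i, j) ∉ E := by rw [memE]; simp [hint]
    simp [hC, hxb, hniE]
  · intro j
    rw [← Finset.sum_fiberwise univ (fun i => mid G M i j) (fun i => C i j)]
    exact Finset.sum_eq_zero fun o _ => hnodesum j o
  · intro j ℓ hI
    rw [← fiber_some hG hI]
    exact hnodesum j (some ℓ)
  · have hxe : ∃ e : {x // x ∈ E}, x e ≠ 0 := by
      by_contra h; push_neg at h
      exact hxne (funext fun e => h e)
    obtain ⟨e, he⟩ := hxe
    refine ⟨(e : Fin m × Fin q).1, (e : Fin m × Fin q).2, (memE _).mp ?_, ?_⟩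
    · exact (Prod.mk.eta (p := (e : Fin m × Fin q))) ▸ e.2
    · have : C (e : Fin m × Fin q).1 (e : Fin m × Fin q).2 = x e := by
        rw [hC]
        show xb ((e : Fin m × Fin q).1, (e : Fin m × Fin q).2) = x e
        rw [Prod.mk.eta, hxbE]
      rw [this]; exact he

def Feasible {m q p : ℕ} (G : Fin p → Finset (Fin m)) (b : Fin q → ℕ) (L U : Fin q → Fin p → ℤ)
    (M : Matrix (Fin m) (Fin q) ℝ) : Prop :=
  (∀ i j, 0 ≤ M i j ∧ M i j ≤ 1) ∧ (∀ i, ∑ j, M i j = 1) ∧ (∀ j, ∑ i, M i j = (b j : ℝ)) ∧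
  (∀ j ℓ, (L j ℓ : ℝ) ≤ ∑ i ∈ G ℓ, M i j ∧ ∑ i ∈ G ℓ, M i j ≤ (U j ℓ : ℝ))

open scoped Classical in
noncomputable def mu {m q p : ℕ} (G : Fin p → Finset (Fin m)) (M : Matrix (Fin m) (Fin q) ℝ) : ℕ :=
  (univ.filter (fun e : Fin m × Fin q => ¬ IsInt (M e.1 e.2))).card +
  (univ.filter (fun v : Fin q × Fin p => ¬ IsInt (∑ i ∈ G v.2, M i v.1))).card

noncomputable def stepsize (v r : ℝ) : ℝ :=
  if 0 < r then ((⌈v⌉ : ℝ) - v) / r else (v - (⌊v⌋ : ℝ)) / (-r)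

lemma frac_lt_ceil {v : ℝ} (hv : ¬ IsInt v) : v < (⌈v⌉ : ℝ) :=
  lt_of_le_of_ne (Int.le_ceil v) (fun h => hv ⟨⌈v⌉, h⟩)

lemma floor_lt_frac {v : ℝ} (hv : ¬ IsInt v) : (⌊v⌋ : ℝ) < v :=
  lt_of_le_of_ne (Int.floor_le v) (fun h => hv ⟨⌊v⌋, h.symm⟩)

lemma stepsize_pos {v r : ℝ} (hv : ¬ IsInt v) (hr : r ≠ 0) : 0 < stepsize v r := by
  unfold stepsize
  split_ifs with h
  · exact div_pos (by linarith [frac_lt_ceil hv]) h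
  · have hr' : r < 0 := lt_of_le_of_ne (not_lt.mp h) hr
    exact div_pos (by linarith [floor_lt_frac hv]) (by linarith)

lemma stepsize_bounds {v r ε : ℝ} (hr : r ≠ 0) (h0 : 0 ≤ ε)
    (hε : ε ≤ stepsize v r) :
    (⌊v⌋ : ℝ) ≤ v + ε * r ∧ v + ε * r ≤ (⌈v⌉ : ℝ) := by
  unfold stepsize at hε
  split_ifs at hε with h
  · have h2 : ε * r ≤ (((⌈v⌉ : ℝ) - v) / r) * r :=
      mul_le_mul_of_nonneg_right hε (le_of_lt h)
    rw [div_mul_cancel₀ _ (ne_of_gt h)] at h2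
    have h4 : 0 ≤ ε * r := mul_nonneg h0 (le_of_lt h)
    exact ⟨by linarith [Int.floor_le v], by linarith⟩
  · have hr' : r < 0 := lt_of_le_of_ne (not_lt.mp h) hr
    have h3 : ((v - (⌊v⌋ : ℝ)) / (-r)) * r = -(v - (⌊v⌋ : ℝ)) := by
      rw [div_mul_eq_mul_div, div_eq_iff (by linarith : (-r : ℝ) ≠ 0)]
      ring
    have h2 : ((v - (⌊v⌋ : ℝ)) / (-r)) * r ≤ ε * r :=
      mul_le_mul_of_nonpos_right hε (le_of_lt hr')
    rw [h3] at h2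
    have h4 : ε * r ≤ 0 := mul_nonpos_of_nonneg_of_nonpos h0 (le_of_lt hr')
    exact ⟨by linarith, by linarith [Int.le_ceil v]⟩

lemma stepsize_hit {v r : ℝ} (hr : r ≠ 0) : IsInt (v + stepsize v r * r) := by
  unfold stepsize
  split_ifs with h
  · refine ⟨⌈v⌉, ?_⟩
    rw [div_mul_cancel₀ _ (ne_of_gt h)]
    ring
  · have hr' : r < 0 := lt_of_le_of_ne (not_lt.mp h) hr
    refine ⟨⌊v⌋, ?_⟩
    have h3 : (v - (⌊v⌋ : ℝ)) / (-r) * r = -(v - (⌊v⌋ : ℝ)) := by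
      rw [div_mul_eq_mul_div, div_eq_iff (by linarith : (-r : ℝ) ≠ 0)]
      ring
    rw [h3]; ring

lemma descent {m q p : ℕ} (G : Fin p → Finset (Fin m)) (b : Fin q → ℕ) (L U : Fin q → Fin p → ℤ)
    (M C : Matrix (Fin m) (Fin q) ℝ)
    (hF : Feasible G b L U M)
    (hCa : ∀ i j, IsInt (M i j) → C i j = 0)
    (hCrow : ∀ i, ∑ j, C i j = 0)
    (hCcol : ∀ j, ∑ i, C i j = 0)
    (hCd : ∀ j ℓ, IsInt (∑ i ∈ G ℓ, M i j) → ∑ i ∈ G ℓ, C i j = 0)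
    (hCne : ∃ i j, C i j ≠ 0) :
    ∃ ε : ℝ, 0 < ε ∧ Feasible G b L U (fun i j => M i j + ε * C i j) ∧
      mu G (fun i j => M i j + ε * C i j) < mu G M := by
  classical
  obtain ⟨hM01, hrow, hcol, hGF⟩ := hF
  set F₁ : Finset (Fin m × Fin q) := univ.filter (fun e => C e.1 e.2 ≠ 0) with hF₁
  set F₂ : Finset (Fin q × Fin p) := univ.filter (fun v => (∑ i ∈ G v.2, C i v.1) ≠ 0) with hF₂
  set S : Finset ℝ := F₁.image (fun e => stepsize (M e.1 e.2) (C e.1 e.2)) ∪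
      F₂.image (fun v => stepsize (∑ i ∈ G v.2, M i v.1) (∑ i ∈ G v.2, C i v.1)) with hS
  have hSne : S.Nonempty := by
    obtain ⟨i, j, hij⟩ := hCne
    refine ⟨stepsize (M i j) (C i j), Finset.mem_union_left _ ?_⟩
    exact Finset.mem_image_of_mem (fun e : Fin m × Fin q => stepsize (M e.1 e.2) (C e.1 e.2))
      (Finset.mem_filter.mpr ⟨Finset.mem_univ ((i, j) : Fin m × Fin q), hij⟩)
  obtain ⟨ε, hεmem, hεle⟩ : ∃ ε, ε ∈ S ∧ ∀ y ∈ S, ε ≤ y :=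
    ⟨S.min' hSne, S.min'_mem hSne, fun y hy => S.min'_le y hy⟩
  have hSpos : ∀ y ∈ S, 0 < y := by
    intro y hy
    rw [hS] at hy
    rcases Finset.mem_union.mp hy with h | h
    · obtain ⟨e, he, rfl⟩ := Finset.mem_image.mp h
      have hCne' : C e.1 e.2 ≠ 0 := (Finset.mem_filter.mp he).2
      exact stepsize_pos (fun hI => hCne' (hCa _ _ hI)) hCne'
    · obtain ⟨v, hv, rfl⟩ := Finset.mem_image.mp h
      have hCne' : (∑ i ∈ G v.2, C i v.1) ≠ 0 := (Finset.mem_filter.mp hv).2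
      exact stepsize_pos (fun hI => hCne' (hCd _ _ hI)) hCne'
  have hεpos : 0 < ε := hSpos ε hεmem
  have hεnn : 0 ≤ ε := le_of_lt hεpos
  -- entry bounds
  have hentry : ∀ i j, C i j ≠ 0 →
      (⌊M i j⌋ : ℝ) ≤ M i j + ε * C i j ∧ M i j + ε * C i j ≤ (⌈M i j⌉ : ℝ) := by
    intro i j hne
    refine stepsize_bounds hne hεnn (hεle _ ?_)
    exact Finset.mem_union_left _
      (Finset.mem_image_of_mem _ (Finset.mem_filter.mpr ⟨Finset.mem_univ (i, j), hne⟩))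
  have hgsum : ∀ j ℓ, (∑ i ∈ G ℓ, C i j) ≠ 0 →
      (⌊∑ i ∈ G ℓ, M i j⌋ : ℝ) ≤ (∑ i ∈ G ℓ, M i j) + ε * (∑ i ∈ G ℓ, C i j) ∧
      (∑ i ∈ G ℓ, M i j) + ε * (∑ i ∈ G ℓ, C i j) ≤ (⌈∑ i ∈ G ℓ, M i j⌉ : ℝ) := by
    intro j ℓ hne
    refine stepsize_bounds hne hεnn (hεle _ ?_)
    exact Finset.mem_union_right _
      (Finset.mem_image_of_mem _ (Finset.mem_filter.mpr ⟨Finset.mem_univ (j, ℓ), hne⟩))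
  have hgsum' : ∀ j ℓ, ∑ i ∈ G ℓ, (M i j + ε * C i j)
      = (∑ i ∈ G ℓ, M i j) + ε * (∑ i ∈ G ℓ, C i j) := by
    intro j ℓ
    rw [Finset.sum_add_distrib, Finset.mul_sum]
  refine ⟨ε, hεpos, ⟨?_, ?_, ?_, ?_⟩, ?_⟩
  · -- entries in [0,1]
    intro i j
    by_cases hne : C i j = 0
    · simp [hne]; exact hM01 i j
    · obtain ⟨hl, hu⟩ := hentry i j hne
      constructor
      · refine le_trans ?_ hl
        exact_mod_cast Int.floor_nonneg.mpr (hM01 i j).1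
      · refine le_trans hu ?_
        have : ⌈M i j⌉ ≤ (1 : ℤ) := Int.ceil_le.mpr (by exact_mod_cast (hM01 i j).2)
        exact_mod_cast this
  · intro i
    rw [Finset.sum_add_distrib, hrow i, ← Finset.mul_sum, hCrow i]
    ring
  · intro j
    rw [Finset.sum_add_distrib, hcol j, ← Finset.mul_sum, hCcol j]
    ring
  · intro j ℓ
    rw [hgsum' j ℓ]
    by_cases hne : (∑ i ∈ G ℓ, C i j) = 0
    · simp [hne]; exact hGF j ℓ
    · obtain ⟨hl, hu⟩ := hgsum j ℓ hne
      constructor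
      · refine le_trans ?_ hl
        exact_mod_cast Int.le_floor.mpr (hGF j ℓ).1
      · refine le_trans hu ?_
        exact_mod_cast Int.ceil_le.mpr (hGF j ℓ).2
  · -- measure decreases
    unfold mu
    have hsub1 : (univ.filter (fun e : Fin m × Fin q => ¬ IsInt (M e.1 e.2 + ε * C e.1 e.2)))
        ⊆ (univ.filter (fun e : Fin m × Fin q => ¬ IsInt (M e.1 e.2))) := by
      intro e he
      rw [Finset.mem_filter] at he ⊢
      refine ⟨he.1, fun hI => he.2 ?_⟩
      rw [hCa e.1 e.2 hI, mul_zero, add_zero]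
      exact hI
    have hsub2 : (univ.filter (fun v : Fin q × Fin p =>
          ¬ IsInt (∑ i ∈ G v.2, (M i v.1 + ε * C i v.1))))
        ⊆ (univ.filter (fun v : Fin q × Fin p => ¬ IsInt (∑ i ∈ G v.2, M i v.1))) := by
      intro v hv
      rw [Finset.mem_filter] at hv ⊢
      refine ⟨hv.1, fun hI => hv.2 ?_⟩
      rw [hgsum' v.1 v.2, hCd v.1 v.2 hI, mul_zero, add_zero]
      exact hI
    rw [hS] at hεmem
    rcases Finset.mem_union.mp hεmem with h | h
    · obtain ⟨e, he, heq⟩ := Finset.mem_image.mp h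
      have hCne' : C e.1 e.2 ≠ 0 := (Finset.mem_filter.mp he).2
      have hfr : ¬ IsInt (M e.1 e.2) := fun hI => hCne' (hCa _ _ hI)
      have hint : IsInt (M e.1 e.2 + ε * C e.1 e.2) := by
        rw [← heq]
        exact stepsize_hit hCne'
      have hstrict : (univ.filter (fun e : Fin m × Fin q =>
          ¬ IsInt (M e.1 e.2 + ε * C e.1 e.2))).card
          < (univ.filter (fun e : Fin m × Fin q => ¬ IsInt (M e.1 e.2))).card := by
        refine Finset.card_lt_card ?_
        rw [Finset.ssubset_iff_of_subset hsub1]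
        exact ⟨e, Finset.mem_filter.mpr ⟨Finset.mem_univ _, hfr⟩,
          fun hmem => (Finset.mem_filter.mp hmem).2 hint⟩
      have hle2 := Finset.card_le_card hsub2
      exact add_lt_add_of_lt_of_le hstrict hle2
    · obtain ⟨v, hv, heq⟩ := Finset.mem_image.mp h
      have hCne' : (∑ i ∈ G v.2, C i v.1) ≠ 0 := (Finset.mem_filter.mp hv).2
      have hfr : ¬ IsInt (∑ i ∈ G v.2, M i v.1) := fun hI => hCne' (hCd _ _ hI)
      have hint : IsInt (∑ i ∈ G v.2, (M i v.1 + ε * C i v.1)) := by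
        rw [hgsum' v.1 v.2, ← heq]
        exact stepsize_hit hCne'
      have hstrict : (univ.filter (fun v : Fin q × Fin p =>
          ¬ IsInt (∑ i ∈ G v.2, (M i v.1 + ε * C i v.1)))).card
          < (univ.filter (fun v : Fin q × Fin p => ¬ IsInt (∑ i ∈ G v.2, M i v.1))).card := by
        refine Finset.card_lt_card ?_
        rw [Finset.ssubset_iff_of_subset hsub2]
        exact ⟨v, Finset.mem_filter.mpr ⟨Finset.mem_univ _, hfr⟩,
          fun hmem => (Finset.mem_filter.mp hmem).2 hint⟩
      have hle1 := Finset.card_le_card hsub1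
      exact add_lt_add_of_le_of_lt hle1 hstrict

def GoodDecomp {m q p : ℕ} (G : Fin p → Finset (Fin m)) (b : Fin q → ℕ)
    (L U : Fin q → Fin p → ℤ) (M : Matrix (Fin m) (Fin q) ℝ) : Prop :=
  ∃ (N : ℕ) (α : Fin N → ℝ) (Ms : Fin N → Matrix (Fin m) (Fin q) ℝ),
    (∀ t, 0 ≤ α t) ∧ (∑ t, α t = 1) ∧
    (∀ t,
      (∀ i j, Ms t i j = 0 ∨ Ms t i j = 1) ∧
      (∀ i, ∑ j, Ms t i j = 1) ∧
      (∀ j, ∑ i, Ms t i j = (b j : ℝ)) ∧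
      (∀ (j : Fin q) (ℓ : Fin p),
        (L j ℓ : ℝ) ≤ (∑ i ∈ G ℓ, Ms t i j) ∧ (∑ i ∈ G ℓ, Ms t i j) ≤ (U j ℓ : ℝ))) ∧
    (∀ i j, M i j = ∑ t, α t * Ms t i j)

lemma goodDecomp_of_int {m q p : ℕ} (G : Fin p → Finset (Fin m)) (b : Fin q → ℕ)
    (L U : Fin q → Fin p → ℤ) (M : Matrix (Fin m) (Fin q) ℝ)
    (hF : Feasible G b L U M) (hint : ∀ i j, IsInt (M i j)) :
    GoodDecomp G b L U M := by
  obtain ⟨hM01, hrow, hcol, hGF⟩ := hF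
  refine ⟨1, fun _ => 1, fun _ => M, fun _ => zero_le_one, by simp, ?_, ?_⟩
  · intro t
    refine ⟨?_, hrow, hcol, hGF⟩
    intro i j
    show M i j = 0 ∨ M i j = 1
    obtain ⟨n, hn⟩ := hint i j
    obtain ⟨h0, h1⟩ := hM01 i j
    rw [hn] at h0 h1 ⊢
    have hn0 : (0 : ℤ) ≤ n := by exact_mod_cast h0
    have hn1 : n ≤ 1 := by exact_mod_cast h1
    interval_cases n
    · left; norm_num
    · right; norm_num
  · intro i j; simp

lemma goodDecomp_combine {m q p : ℕ} (G : Fin p → Finset (Fin m)) (b : Fin q → ℕ)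
    (L U : Fin q → Fin p → ℤ) (M M₁ M₂ : Matrix (Fin m) (Fin q) ℝ) (lam : ℝ)
    (h0 : 0 ≤ lam) (h1 : lam ≤ 1)
    (hM : ∀ i j, M i j = lam * M₁ i j + (1 - lam) * M₂ i j)
    (hD1 : GoodDecomp G b L U M₁) (hD2 : GoodDecomp G b L U M₂) :
    GoodDecomp G b L U M := by
  obtain ⟨N₁, α₁, Ms₁, hα₁, hsum₁, hprop₁, hdec₁⟩ := hD1
  obtain ⟨N₂, α₂, Ms₂, hα₂, hsum₂, hprop₂, hdec₂⟩ := hD2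
  refine ⟨N₁ + N₂, Fin.append (fun t => lam * α₁ t) (fun t => (1 - lam) * α₂ t),
    Fin.append Ms₁ Ms₂, ?_, ?_, ?_, ?_⟩
  · intro t
    refine Fin.addCases (fun i => ?_) (fun i => ?_) t
    · rw [Fin.append_left]; exact mul_nonneg h0 (hα₁ i)
    · rw [Fin.append_right]; exact mul_nonneg (by linarith) (hα₂ i)
  · rw [Fin.sum_univ_add]
    simp only [Fin.append_left, Fin.append_right]
    rw [← Finset.mul_sum, ← Finset.mul_sum, hsum₁, hsum₂]
    ring
  · intro t
    refine Fin.addCases (fun i => ?_) (fun i => ?_) t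
    · simp only [Fin.append_left]; exact hprop₁ i
    · simp only [Fin.append_right]; exact hprop₂ i
  · intro i j
    rw [Fin.sum_univ_add]
    simp only [Fin.append_left, Fin.append_right]
    have e1 : ∑ t : Fin N₁, (lam * α₁ t) * Ms₁ t i j = lam * ∑ t : Fin N₁, α₁ t * Ms₁ t i j := by
      rw [Finset.mul_sum]; exact Finset.sum_congr rfl fun t _ => by ring
    have e2 : ∑ t : Fin N₂, ((1 - lam) * α₂ t) * Ms₂ t i j
        = (1 - lam) * ∑ t : Fin N₂, α₂ t * Ms₂ t i j := by
      rw [Finset.mul_sum]; exact Finset.sum_congr rfl fun t _ => by ring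
    rw [e1, e2, ← hdec₁ i j, ← hdec₂ i j]
    exact hM i j

lemma main_induction {m q p : ℕ} (G : Fin p → Finset (Fin m))
    (hG : ∀ ℓ ℓ' : Fin p, ℓ ≠ ℓ' → Disjoint (G ℓ) (G ℓ'))
    (b : Fin q → ℕ) (L U : Fin q → Fin p → ℤ) :
    ∀ n (M : Matrix (Fin m) (Fin q) ℝ), Feasible G b L U M → mu G M ≤ n →
      GoodDecomp G b L U M := by
  intro n
  induction n with
  | zero =>
    intro M hF hmu
    refine goodDecomp_of_int G b L U M hF ?_
    intro i j
    by_contra hni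
    classical
    have h1 : (0:ℕ) < (univ.filter (fun e : Fin m × Fin q => ¬ IsInt (M e.1 e.2))).card := by
      refine Finset.card_pos.mpr ⟨(i, j), ?_⟩
      simp only [Finset.mem_filter, Finset.mem_univ, true_and]
      exact hni
    have h2 : mu G M = 0 := Nat.le_zero.mp hmu
    unfold mu at h2
    omega
  | succ n ih =>
    intro M hF hmu
    by_cases hint : ∀ i j, IsInt (M i j)
    · exact goodDecomp_of_int G b L U M hF hint
    · push_neg at hint
      obtain ⟨C, hCa, hCrow, hCcol, hCd, i₀, j₀, hfr, hC0⟩ :=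
        exists_direction G hG b M hF.2.1 hF.2.2.1 hint
      obtain ⟨ε₁, hε₁, hF₁, hμ₁⟩ := descent G b L U M C hF hCa hCrow hCcol hCd ⟨i₀, j₀, hC0⟩
      obtain ⟨ε₂, hε₂, hF₂, hμ₂⟩ := descent G b L U M (-C) hF
        (fun i j h => by simp [Matrix.neg_apply, hCa i j h])
        (fun i => by simp only [Matrix.neg_apply, Finset.sum_neg_distrib, hCrow i, neg_zero])
        (fun j => by simp only [Matrix.neg_apply, Finset.sum_neg_distrib, hCcol j, neg_zero])
        (fun j ℓ h => by simp only [Matrix.neg_apply, Finset.sum_neg_distrib, hCd j ℓ h, neg_zero])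
        ⟨i₀, j₀, by simp [Matrix.neg_apply, hC0]⟩
      have hεsum : ε₁ + ε₂ > 0 := by linarith
      have hεne : ε₁ + ε₂ ≠ 0 := ne_of_gt hεsum
      set lam : ℝ := ε₂ / (ε₁ + ε₂) with hlam
      have hl0 : 0 ≤ lam := div_nonneg (le_of_lt hε₂) (le_of_lt hεsum)
      have hl1 : lam ≤ 1 := by
        rw [hlam, div_le_one hεsum]; linarith
      refine goodDecomp_combine G b L U M
        (fun i j => M i j + ε₁ * C i j) (fun i j => M i j + ε₂ * (-C) i j) lam hl0 hl1 ?_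
        (ih _ hF₁ (by omega)) (ih _ hF₂ (by omega))
      intro i j
      simp only [Matrix.neg_apply]
      rw [hlam]
      field_simp
      ring

/-- For pairwise disjoint groups `G_1,…,G_p ⊆ {1,…,m}`, positive block
sizes `b_1,…,b_q` summing to `m`, and `L, U ∈ ℤ^{q×p}`, every fractional matching
`M ∈ [0,1]^{m×q}` with unit row sums, column sums `b_j`, and the group-fairness
constraints can be written as a finite convex combination of 0/1 matchings each of
which satisfies all three families of constraints. -/
theorem statement_4 (m q p : ℕ)
    (G : Fin p → Finset (Fin m))
    (hG : ∀ ℓ ℓ' : Fin p, ℓ ≠ ℓ' → Disjoint (G ℓ) (G ℓ'))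
    (b : Fin q → ℕ) (hb : ∀ j, 0 < b j) (hbsum : ∑ j, b j = m)
    (L U : Fin q → Fin p → ℤ)
    (M : Matrix (Fin m) (Fin q) ℝ)
    (hM01 : ∀ i j, 0 ≤ M i j ∧ M i j ≤ 1)
    (hrow : ∀ i, ∑ j, M i j = 1)
    (hcol : ∀ j, ∑ i, M i j = (b j : ℝ))
    (hGF : ∀ (j : Fin q) (ℓ : Fin p),
      (L j ℓ : ℝ) ≤ (∑ i ∈ G ℓ, M i j) ∧ (∑ i ∈ G ℓ, M i j) ≤ (U j ℓ : ℝ)) :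
    ∃ (N : ℕ) (α : Fin N → ℝ) (Ms : Fin N → Matrix (Fin m) (Fin q) ℝ),
      (∀ t, 0 ≤ α t) ∧ (∑ t, α t = 1) ∧
      (∀ t,
        (∀ i j, Ms t i j = 0 ∨ Ms t i j = 1) ∧
        (∀ i, ∑ j, Ms t i j = 1) ∧
        (∀ j, ∑ i, Ms t i j = (b j : ℝ)) ∧
        (∀ (j : Fin q) (ℓ : Fin p),
          (L j ℓ : ℝ) ≤ (∑ i ∈ G ℓ, Ms t i j) ∧ (∑ i ∈ G ℓ, Ms t i j) ≤ (U j ℓ : ℝ))) ∧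
      (∀ i j, M i j = ∑ t, α t * Ms t i j) := by
  have hF : Feasible G b L U M := ⟨hM01, hrow, hcol, hGF⟩
  obtain ⟨N, α, Ms, h1, h2, h3, h4⟩ :=
    main_induction G hG b L U (mu G M) M hF le_rfl
  exact ⟨N, α, Ms, h1, h2, h3, h4⟩
end

section
/- Let B_1,…,B_q be consecutive blocks partitioning the positions {1,…,n} (all positions of B_j precede all positions of B_{j+1}), with s(j) denoting the first position of B_j. Let ρ ∈ ℝ^m have nonnegative entries and let v ∈ ℝ^n satisfy v_1 ≥ v_2 ≥ … ≥ v_n > 0. Let D̂ ∈ [0,1]^{m×n} be a matrix with Σ_i D̂_{ij} = 1 for every position j, and let D = Σ_t α_t R_t be a finite convex combination (α_t ≥ 0, Σ_t α_t = 1) of rankings R_t such that in each R_t, within each block B_j, the items placed in B_j appear in nonincreasing order of their utility ρ. If Σ_{t∈B_j} D_{it} = Σ_{t∈B_j} D̂_{it} for every item i and block j, then ρᵀDv ≥ (min_{1≤j≤q} (Σ_{s∈B_j} v_s)/(|B_j| · v_{s(j)})) · ρᵀD̂v. -/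
open Finset

private lemma swap3 {A B C M : Type*} [AddCommMonoid M] (s : Finset A) (t : Finset B)
    (u : Finset C) (f : A → B → C → M) :
    ∑ a ∈ s, ∑ b ∈ t, ∑ c ∈ u, f a b c = ∑ c ∈ u, ∑ b ∈ t, ∑ a ∈ s, f a b c := by
  calc ∑ a ∈ s, ∑ b ∈ t, ∑ c ∈ u, f a b c
      = ∑ b ∈ t, ∑ a ∈ s, ∑ c ∈ u, f a b c := Finset.sum_comm
    _ = ∑ b ∈ t, ∑ c ∈ u, ∑ a ∈ s, f a b c :=
        Finset.sum_congr rfl fun b _ => Finset.sum_comm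
    _ = ∑ c ∈ u, ∑ b ∈ t, ∑ a ∈ s, f a b c := Finset.sum_comm

/-- A ranking of `m` items into `n` positions. -/
def IsRanking (m n : ℕ) (R : Matrix (Fin m) (Fin n) ℝ) : Prop :=
  (∀ i j, R i j = 0 ∨ R i j = 1) ∧
  (∀ i, ∑ j, R i j ≤ 1) ∧
  (∀ j, ∑ i, R i j = 1)

/-- Let `B_1,…,B_q` be consecutive blocks partitioning the positions,
`ρ ≥ 0`, `v` nonincreasing and positive. Let `D̂ ∈ [0,1]^{m×n}` have unit column sums
and let `D = Σ_t α_t R_t` be a convex combination of rankings, each of which places the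
items of every block in nonincreasing order of utility. If `D` and `D̂` have the same
block-wise sums, then `ρᵀDv ≥ (min_j (Σ_{s∈B_j} v_s)/(|B_j|·v_{s(j)})) · ρᵀD̂v`. -/
theorem statement_6 (m n q : ℕ) (hq : 0 < q) (hmn : n ≤ m)
    (B : Fin q → Finset (Fin n))
    (hBpart : ∀ t : Fin n, ∃! j, t ∈ B j)
    (hBne : ∀ j, (B j).Nonempty)
    (hBconsec : ∀ j j' : Fin q, j < j' → ∀ s ∈ B j, ∀ s' ∈ B j', s < s')
    (ρ : Fin m → ℝ) (hρ : ∀ i, 0 ≤ ρ i)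
    (v : Fin n → ℝ) (hvpos : ∀ s, 0 < v s)
    (hvmono : ∀ s s' : Fin n, s ≤ s' → v s' ≤ v s)
    (Dhat : Matrix (Fin m) (Fin n) ℝ)
    (hDhat01 : ∀ i s, 0 ≤ Dhat i s ∧ Dhat i s ≤ 1)
    (hDhatcol : ∀ s, ∑ i, Dhat i s = 1)
    (N : ℕ) (α : Fin N → ℝ) (R : Fin N → Matrix (Fin m) (Fin n) ℝ)
    (hα : ∀ t, 0 ≤ α t) (hαsum : ∑ t, α t = 1)
    (hrank : ∀ t, IsRanking m n (R t))
    (hsorted : ∀ (t : Fin N) (j : Fin q) (s s' : Fin n), s ∈ B j → s' ∈ B j → s < s' →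
      ∀ i i' : Fin m, R t i s = 1 → R t i' s' = 1 → ρ i' ≤ ρ i)
    (hblock : ∀ (i : Fin m) (j : Fin q),
      (∑ s ∈ B j, ∑ t, α t * R t i s) = ∑ s ∈ B j, Dhat i s) :
    (Finset.univ.inf' ⟨⟨0, hq⟩, Finset.mem_univ _⟩ fun j =>
        (∑ s ∈ B j, v s) / (((B j).card : ℝ) * v ((B j).min' (hBne j)))) *
      (∑ i, ∑ s, ρ i * v s * Dhat i s) ≤
    ∑ i, ∑ s, ρ i * v s * (∑ t, α t * R t i s) := by
  classical
  -- abbreviations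
  set c : ℝ := Finset.univ.inf' ⟨⟨0, hq⟩, Finset.mem_univ _⟩ fun j =>
      (∑ s ∈ B j, v s) / (((B j).card : ℝ) * v ((B j).min' (hBne j))) with hc
  set vm : Fin q → ℝ := fun j => v ((B j).min' (hBne j)) with hvm
  set W : Fin q → ℝ := fun j => ∑ s ∈ B j, v s with hW
  set k : Fin q → ℝ := fun j => ((B j).card : ℝ) with hk
  set T : Fin q → ℝ := fun j => ∑ i, ρ i * ∑ s ∈ B j, Dhat i s with hT
  have hkpos : ∀ j, (0:ℝ) < k j := fun j => by
    simp only [hk]; exact_mod_cast Finset.card_pos.mpr (hBne j)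
  have hvmpos : ∀ j, 0 < vm j := fun j => hvpos _
  have hT0 : ∀ j, 0 ≤ T j := fun j =>
    Finset.sum_nonneg fun i _ => mul_nonneg (hρ i)
      (Finset.sum_nonneg fun s _ => (hDhat01 i s).1)
  -- the classifier of the partition
  choose φ hφ1 hφ2 using hBpart
  have hBeq : ∀ j, B j = Finset.univ.filter (fun s => φ s = j) := by
    intro j; ext s
    simp only [Finset.mem_filter, Finset.mem_univ, true_and]
    exact ⟨fun hs => (hφ2 s j hs).symm, fun h => h ▸ hφ1 s⟩
  have hpart : ∀ f : Fin n → ℝ, ∑ s, f s = ∑ j, ∑ s ∈ B j, f s := by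
    intro f
    rw [← Finset.sum_fiberwise Finset.univ φ f]
    exact Finset.sum_congr rfl fun j _ => by rw [hBeq j]
  -- c ≤ each ratio, and c ≥ 0
  have hcle : ∀ j, c ≤ W j / (k j * vm j) := fun j => Finset.inf'_le _ (Finset.mem_univ j)
  have hc0 : 0 ≤ c := by
    apply Finset.le_inf'
    intro j _
    exact div_nonneg (Finset.sum_nonneg fun s _ => (hvpos s).le)
      (mul_nonneg (hkpos j).le (hvmpos j).le)
  -- each column of each ranking picks out exactly one item
  have hcol : ∀ (t : Fin N) (s : Fin n),
      ∃ i, R t i s = 1 ∧ ∑ i', ρ i' * R t i' s = ρ i := by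
    intro t s
    obtain ⟨h01, hrow, hcolsum⟩ := hrank t
    have hex : ∃ i, R t i s = 1 := by
      by_contra h
      push_neg at h
      have hz : ∀ i, R t i s = 0 := fun i => (h01 i s).resolve_right (h i)
      have h1 := hcolsum s
      simp only [hz, Finset.sum_const_zero] at h1
      norm_num at h1
    obtain ⟨i, hi⟩ := hex
    refine ⟨i, hi, ?_⟩
    have hzero : ∀ i', i' ≠ i → R t i' s = 0 := by
      intro i' hne
      rcases h01 i' s with h0 | h1
      · exact h0
      · exfalso
        have hle : ∑ k ∈ ({i, i'} : Finset (Fin m)), R t k s ≤ ∑ k, R t k s := by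
          refine Finset.sum_le_sum_of_subset_of_nonneg (Finset.subset_univ _) ?_
          intro x _ _
          rcases h01 x s with h | h <;> simp [h]
        rw [Finset.sum_pair (Ne.symm hne), hi, h1, hcolsum s] at hle
        linarith
    rw [Finset.sum_eq_single i (fun i' _ hne => by rw [hzero i' hne, mul_zero])
      (fun h => absurd (Finset.mem_univ i) h), hi, mul_one]
  -- Chebyshev within each block of each ranking
  have hcheb : ∀ (t : Fin N) (j : Fin q),
      W j / k j * (∑ s ∈ B j, ∑ i, ρ i * R t i s)
        ≤ ∑ s ∈ B j, (∑ i, ρ i * R t i s) * v s := by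
    intro t j
    have hmono : MonovaryOn (fun s => ∑ i, ρ i * R t i s) v (B j) := by
      intro s hs s' hs' hlt
      have hss : s' < s := by
        by_contra h
        push_neg at h
        exact absurd (hvmono s s' h) (not_le.mpr hlt)
      obtain ⟨i, hi, hfi⟩ := hcol t s
      obtain ⟨i', hi', hfi'⟩ := hcol t s'
      simp only at hfi hfi' ⊢
      rw [hfi, hfi']
      exact hsorted t j s' s hs' hs hss i' i hi' hi
    have h := hmono.sum_mul_sum_le_card_mul_sum
    rw [div_mul_eq_mul_div, div_le_iff₀ (hkpos j)]
    calc W j * ∑ s ∈ B j, ∑ i, ρ i * R t i s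
        = (∑ s ∈ B j, (fun s => ∑ i, ρ i * R t i s) s) * ∑ s ∈ B j, v s := by
          rw [hW]; ring
      _ ≤ ((B j).card : ℝ) * ∑ s ∈ B j, (fun s => ∑ i, ρ i * R t i s) s * v s := h
      _ = (∑ s ∈ B j, (∑ i, ρ i * R t i s) * v s) * k j := by rw [hk]; ring
  -- Claim 1 : the D̂ side bound
  have claim1 : (∑ i, ∑ s, ρ i * v s * Dhat i s) ≤ ∑ j, vm j * T j := by
    have step : ∀ i, ∑ s, ρ i * v s * Dhat i s
        ≤ ∑ j, vm j * (ρ i * ∑ s ∈ B j, Dhat i s) := by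
      intro i
      rw [hpart (fun s => ρ i * v s * Dhat i s)]
      refine Finset.sum_le_sum fun j _ => ?_
      calc ∑ s ∈ B j, ρ i * v s * Dhat i s
          ≤ ∑ s ∈ B j, ρ i * vm j * Dhat i s := by
            refine Finset.sum_le_sum fun s hs => ?_
            have hvs : v s ≤ vm j := hvmono _ _ (Finset.min'_le _ s hs)
            exact mul_le_mul_of_nonneg_right
              (mul_le_mul_of_nonneg_left hvs (hρ i)) (hDhat01 i s).1
        _ = vm j * (ρ i * ∑ s ∈ B j, Dhat i s) := by
            rw [← Finset.mul_sum]; ring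
    calc ∑ i, ∑ s, ρ i * v s * Dhat i s
        ≤ ∑ i, ∑ j, vm j * (ρ i * ∑ s ∈ B j, Dhat i s) :=
          Finset.sum_le_sum fun i _ => step i
      _ = ∑ j, vm j * T j := by
          rw [Finset.sum_comm]
          exact Finset.sum_congr rfl fun j _ => (Finset.mul_sum _ _ _).symm
  -- Claim 2 : termwise comparison of c·vm j with W j / k j
  have claim2 : ∀ j, c * (vm j * T j) ≤ W j / k j * T j := by
    intro j
    have h1 : c * (k j * vm j) ≤ W j := by
      have h := hcle j
      rwa [le_div_iff₀ (mul_pos (hkpos j) (hvmpos j))] at h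
    have h2 : c * vm j ≤ W j / k j := by
      rw [le_div_iff₀ (hkpos j)]
      calc c * vm j * k j = c * (k j * vm j) := by ring
        _ ≤ W j := h1
    calc c * (vm j * T j) = (c * vm j) * T j := by ring
      _ ≤ W j / k j * T j := mul_le_mul_of_nonneg_right h2 (hT0 j)
  -- block-sum identity
  have hTA : ∀ j, ∑ t, α t * ∑ s ∈ B j, ∑ i, ρ i * R t i s = T j := by
    intro j
    have e : ∑ t, α t * ∑ s ∈ B j, ∑ i, ρ i * R t i s
        = ∑ i, ρ i * ∑ s ∈ B j, ∑ t, α t * R t i s := by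
      simp only [Finset.mul_sum]
      rw [swap3]
      exact Finset.sum_congr rfl fun i _ => Finset.sum_congr rfl fun s _ =>
        Finset.sum_congr rfl fun t _ => by ring
    rw [e, hT]
    exact Finset.sum_congr rfl fun i _ => by rw [hblock i j]
  -- Claim 3 : the D side bound
  have claim3 : ∑ j, W j / k j * T j ≤ ∑ i, ∑ s, ρ i * v s * (∑ t, α t * R t i s) := by
    have e1 : (∑ i, ∑ s, ρ i * v s * (∑ t, α t * R t i s))
        = ∑ t, α t * ∑ j, ∑ s ∈ B j, (∑ i, ρ i * R t i s) * v s := by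
      have h1 : ∀ t : Fin N, ∑ j, ∑ s ∈ B j, (∑ i, ρ i * R t i s) * v s
          = ∑ s, (∑ i, ρ i * R t i s) * v s := fun t =>
        (hpart fun s => (∑ i, ρ i * R t i s) * v s).symm
      simp only [h1]
      simp only [Finset.mul_sum, Finset.sum_mul]
      rw [swap3]
      exact Finset.sum_congr rfl fun t _ => Finset.sum_congr rfl fun s _ =>
        Finset.sum_congr rfl fun i _ => by ring
    rw [e1]
    have hper : ∀ t : Fin N, α t * ∑ j, W j / k j * (∑ s ∈ B j, ∑ i, ρ i * R t i s)
        ≤ α t * ∑ j, ∑ s ∈ B j, (∑ i, ρ i * R t i s) * v s := fun t =>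
      mul_le_mul_of_nonneg_left (Finset.sum_le_sum fun j _ => hcheb t j) (hα t)
    refine le_trans ?_ (Finset.sum_le_sum fun t _ => hper t)
    have e2 : ∑ t, α t * ∑ j, W j / k j * (∑ s ∈ B j, ∑ i, ρ i * R t i s)
        = ∑ j, W j / k j * T j := by
      have : ∑ t, α t * ∑ j, W j / k j * (∑ s ∈ B j, ∑ i, ρ i * R t i s)
          = ∑ j, W j / k j * ∑ t, α t * (∑ s ∈ B j, ∑ i, ρ i * R t i s) := by
        simp only [Finset.mul_sum]
        rw [Finset.sum_comm]
        exact Finset.sum_congr rfl fun j _ => Finset.sum_congr rfl fun t _ =>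
          Finset.sum_congr rfl fun s _ => Finset.sum_congr rfl fun i _ => by ring
      rw [this]
      exact Finset.sum_congr rfl fun j _ => by rw [hTA j]
    rw [e2]
  -- assemble
  calc c * (∑ i, ∑ s, ρ i * v s * Dhat i s)
      ≤ c * ∑ j, vm j * T j := mul_le_mul_of_nonneg_left claim1 hc0
    _ = ∑ j, c * (vm j * T j) := Finset.mul_sum _ _ _
    _ ≤ ∑ j, W j / k j * T j := Finset.sum_le_sum fun j _ => claim2 j
    _ ≤ ∑ i, ∑ s, ρ i * v s * (∑ t, α t * R t i s) := claim3
end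

section
/- Let v_1,…,v_n be positive reals such that for every integer r ≥ 0, the quantity v_{t+r}/v_t is nondecreasing in t over the range 1 ≤ t ≤ n − r. Let n = qk and partition the positions into consecutive blocks B_j = {(j−1)k+1,…,jk} for j = 1,…,q. Then for every j ∈ {1,…,q}, (Σ_{s∈B_j} v_s)/(k · v_{(j−1)k+1}) ≥ (v_1+v_2+…+v_k)/(k · v_1); equivalently, min_{1≤j≤q} (Σ_{s∈B_j} v_s)/(k · v_{s(j)}) = (v_1+…+v_k)/(k·v_1), where s(j) = (j−1)k+1 is the first position of block B_j. -/
open Finset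

/-- If the positive position discounts `v` (0-indexed; position `t+1`
in the paper is index `t` here) satisfy the ratio condition — for every `r ≥ 0` the map
`t ↦ v (t+r) / v t` is nondecreasing on the valid range — and the `n = q·k` positions
are partitioned into consecutive blocks `B_j = {j·k, …, j·k + k − 1}` for `j = 0,…,q-1`,
then every block ratio `(Σ_{s∈B_j} v s)/(k · v (j·k))` is at least
`(v 0 + … + v (k-1))/(k · v 0)`; equivalently the minimum over all blocks equals
`(v 0 + … + v (k-1))/(k · v 0)` (the value at the first block). -/
theorem statement_9 (q k : ℕ) (hq : 0 < q) (hk : 0 < k)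
    (v : ℕ → ℝ) (hvpos : ∀ i, i < q * k → 0 < v i)
    (hratio : ∀ r t t' : ℕ, t ≤ t' → t' + r < q * k →
      v (t + r) / v t ≤ v (t' + r) / v t') :
    (∀ j < q, (∑ s ∈ Finset.range k, v s) / (k * v 0) ≤
        (∑ s ∈ Finset.range k, v (j * k + s)) / (k * v (j * k))) ∧
    ((Finset.range q).inf' ⟨0, Finset.mem_range.mpr hq⟩
        (fun j => (∑ s ∈ Finset.range k, v (j * k + s)) / (k * v (j * k))) =
      (∑ s ∈ Finset.range k, v s) / (k * v 0)) := by
  have key : ∀ j < q, (∑ s ∈ Finset.range k, v s) / (k * v 0) ≤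
      (∑ s ∈ Finset.range k, v (j * k + s)) / (k * v (j * k)) := by
    intro j hj
    have hbound : ∀ s < k, j * k + s < q * k := by
      intro s hs
      calc j * k + s < j * k + k := by omega
        _ ≤ q * k := by
          have : j + 1 ≤ q := hj
          calc j * k + k = (j + 1) * k := by ring
            _ ≤ q * k := Nat.mul_le_mul_right k this
    have hv0 : 0 < v 0 := hvpos 0 (by positivity)
    have hvjk : 0 < v (j * k) := hvpos (j * k) (by
      have := hbound 0 hk; simpa using this)
    have hsum : (∑ s ∈ Finset.range k, v s) / v 0 ≤
        (∑ s ∈ Finset.range k, v (j * k + s)) / v (j * k) := by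
      rw [Finset.sum_div, Finset.sum_div]
      apply Finset.sum_le_sum
      intro s hs
      rw [Finset.mem_range] at hs
      have := hratio s 0 (j * k) (Nat.zero_le _) (hbound s hs)
      simpa using this
    have hk' : (0:ℝ) < (k : ℝ) := by exact_mod_cast hk
    calc (∑ s ∈ Finset.range k, v s) / (k * v 0)
        = ((∑ s ∈ Finset.range k, v s) / v 0) / k := by
          rw [div_div, mul_comm]
      _ ≤ ((∑ s ∈ Finset.range k, v (j * k + s)) / v (j * k)) / k :=
          div_le_div_of_nonneg_right hsum hk'.le
      _ = (∑ s ∈ Finset.range k, v (j * k + s)) / (k * v (j * k)) := by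
          rw [div_div, mul_comm (v (j * k)) (k:ℝ)]
  refine ⟨key, le_antisymm ?_ ?_⟩
  · have h0 : (0 : ℕ) ∈ Finset.range q := Finset.mem_range.mpr hq
    have := Finset.inf'_le (fun j => (∑ s ∈ Finset.range k, v (j * k + s)) / (k * v (j * k))) h0
    simpa using this
  · apply Finset.le_inf'
    intro j hj
    exact key j (Finset.mem_range.mp hj)
end

section
/- Let Π be the 4×4 matrix Π = (1/2)·[[1,0,1,0],[0,1,0,1],[0,1,1,0],[1,0,0,1]] (i.e., Π_{11}=Π_{13}=Π_{22}=Π_{24}=Π_{32}=Π_{33}=Π_{41}=Π_{44}=1/2 and all other entries 0). Then Π cannot be written as a finite convex combination Σ_t α_t P_t (α_t ≥ 0, Σ_t α_t = 1) of 4×4 permutation matrices P_t each of which satisfies the group-fairness constraint (P_t)_{11} + (P_t)_{12} + (P_t)_{21} + (P_t)_{22} ≤ 1 (i.e., at most one of items 1 and 2 is placed in positions 1 or 2). -/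
open Finset

/-- A 4×4 permutation matrix (as a real matrix with 0/1 entries). -/
def IsPermMatrix (P : Matrix (Fin 4) (Fin 4) ℝ) : Prop :=
  (∀ i j, P i j = 0 ∨ P i j = 1) ∧
  (∀ i, ∑ j, P i j = 1) ∧
  (∀ j, ∑ i, P i j = 1)

/-- The matrix `Π = (1/2)·[[1,0,1,0],[0,1,0,1],[0,1,1,0],[1,0,0,1]]`. -/
noncomputable def PiMat : Matrix (Fin 4) (Fin 4) ℝ :=
  (1 / 2 : ℝ) • !![1, 0, 1, 0; 0, 1, 0, 1; 0, 1, 1, 0; 1, 0, 0, 1]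

/-- `Π` cannot be written as a finite convex combination of 4×4
permutation matrices each satisfying the group-fairness constraint
`P_{11} + P_{12} + P_{21} + P_{22} ≤ 1` (at most one of items 1 and 2 in positions
1 or 2). -/
theorem statement_10 :
    ¬ ∃ (N : ℕ) (α : Fin N → ℝ) (P : Fin N → Matrix (Fin 4) (Fin 4) ℝ),
      (∀ t, 0 ≤ α t) ∧ (∑ t, α t = 1) ∧
      (∀ t, IsPermMatrix (P t) ∧ P t 0 0 + P t 0 1 + P t 1 0 + P t 1 1 ≤ 1) ∧
      (∀ i j, PiMat i j = ∑ t, α t * P t i j) := by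
  rintro ⟨N, α, P, hα, hsum, hP, hPi⟩
  have nonneg : ∀ (s : Fin N) i j, 0 ≤ α s * P s i j := by
    intro s i j
    apply mul_nonneg (hα s)
    rcases (hP s).1.1 i j with h | h <;> simp [h]
  have key : ∀ t, α t * P t 0 0 = 0 := by
    intro t
    rcases eq_or_lt_of_le (hα t) with h0 | hpos
    · rw [← h0, zero_mul]
    obtain ⟨⟨h01, hrow, hcol⟩, hblk⟩ := hP t
    have hz : ∀ i j, PiMat i j = 0 → P t i j = 0 := by
      intro i j hij
      have hsum0 : ∑ s, α s * P s i j = 0 := by rw [← hPi i j, hij]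
      have := (Finset.sum_eq_zero_iff_of_nonneg
        (fun s _ => nonneg s i j)).mp hsum0 t (Finset.mem_univ t)
      rcases mul_eq_zero.mp this with h | h
      · exact absurd h (ne_of_gt hpos)
      · exact h
    have z01 : P t 0 1 = 0 := hz 0 1 (by norm_num [PiMat])
    have z03 : P t 0 3 = 0 := hz 0 3 (by simp [PiMat])
    have z10 : P t 1 0 = 0 := hz 1 0 (by norm_num [PiMat])
    have z12 : P t 1 2 = 0 := hz 1 2 (by simp [PiMat])
    have z20 : P t 2 0 = 0 := hz 2 0 (by simp [PiMat])
    have z23 : P t 2 3 = 0 := hz 2 3 (by simp [PiMat])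
    have z31 : P t 3 1 = 0 := hz 3 1 (by simp [PiMat])
    have z32 : P t 3 2 = 0 := hz 3 2 (by simp [PiMat])
    rcases h01 0 0 with h00 | h00
    · rw [h00, mul_zero]
    exfalso
    -- block constraint forces P t 1 1 = 0
    have h11 : P t 1 1 = 0 := by
      rcases h01 1 1 with h | h
      · exact h
      · rw [h00, z01, z10, h] at hblk; linarith
    have hr1 := hrow 1
    rw [Fin.sum_univ_four, z10, h11, z12] at hr1
    -- so P t 1 3 = 1
    have h13 : P t 1 3 = 1 := by linarith
    have hc3 := hcol 3
    rw [Fin.sum_univ_four, z03, h13, z23] at hc3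
    have h33 : P t 3 3 = 0 := by linarith
    have hr3 := hrow 3
    rw [Fin.sum_univ_four, z31, z32, h33] at hr3
    have h30 : P t 3 0 = 1 := by linarith
    have hc0 := hcol 0
    rw [Fin.sum_univ_four, h00, z10, z20, h30] at hc0
    linarith
  have h00 : PiMat 0 0 = 0 := by
    rw [hPi 0 0]
    exact Finset.sum_eq_zero fun t _ => key t
  norm_num [PiMat] at h00
end

section
/- Let S > 0, let X_1,…,X_m be independent random variables each uniformly distributed on [0,S], and let X_{(1)} ≥ X_{(2)} ≥ … ≥ X_{(m)} denote their decreasing rearrangement. Then with probability at least 1 − 4m^{−1/4}, it holds simultaneously for all i ∈ {1,…,m} that |X_{(i)} − S(1 − i/m)| ≤ 2S·m^{−1/4}. -/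
open MeasureTheory Finset ProbabilityTheory

open MeasureTheory Finset

/-- count of entries above t for a nonincreasing tuple -/
lemma aux_count_lt {m : ℕ} (y : Fin m → ℝ) (hsort : ∀ a b : Fin m, a ≤ b → y b ≤ y a)
    (t : ℝ) (i : Fin m) :
    t < y i ↔ (i : ℕ) < (univ.filter (fun j => t < y j)).card := by
  constructor
  · intro h
    have hsub : Finset.Iic i ⊆ univ.filter (fun j => t < y j) := by
      intro j hj
      simp only [Finset.mem_Iic] at hj
      simp only [Finset.mem_filter, Finset.mem_univ, true_and]
      exact lt_of_lt_of_le h (hsort j i hj)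
    calc (i : ℕ) < (Finset.Iic i).card := by rw [Fin.card_Iic]; omega
      _ ≤ _ := Finset.card_le_card hsub
  · intro h
    by_contra hc
    push_neg at hc
    have hsub : univ.filter (fun j => t < y j) ⊆ Finset.Iio i := by
      intro j hj
      simp only [Finset.mem_filter, Finset.mem_univ, true_and] at hj
      simp only [Finset.mem_Iio]
      by_contra hji
      push_neg at hji
      exact absurd (lt_of_lt_of_le hj (hsort i j hji)) (not_lt.2 hc)
    have := Finset.card_le_card hsub
    rw [Fin.card_Iio] at this
    omega

/-- main deterministic lemma -/
lemma aux_det {m : ℕ} (S ε : ℝ) (hS : 0 < S) (hε : 0 < ε) (hε1 : ε ≤ 1)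
    (y : Fin m → ℝ) (hsort : ∀ a b : Fin m, a ≤ b → y b ≤ y a)
    (hrange : ∀ j, y j ∈ Set.Icc (0:ℝ) S)
    (hgrid : ∀ k : ℕ, k ≤ ⌊1/ε⌋₊ →
      |((univ.filter (fun j => S * (k * ε) < y j)).card : ℝ) - m * (1 - k * ε)| ≤ m * ε) :
    ∀ i : Fin m, |y i - S * (1 - ((i : ℕ) + 1) / m)| ≤ 2 * S * ε := by
  intro i
  have hm : 0 < m := i.pos
  have hmR : (0:ℝ) < m := by exact_mod_cast hm
  set p : ℝ := ((i : ℕ) + 1) / m with hp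
  have hp0 : 0 < p := by positivity
  have hp1 : p ≤ 1 := by
    rw [hp, div_le_one hmR]
    have := i.isLt
    exact_mod_cast Nat.succ_le_of_lt i.isLt
  rw [abs_le]
  constructor
  · -- lower bound: S*(1-p) - 2*S*ε ≤ y i, i.e. -(2Sε) ≤ y i - S(1-p)
    rcases le_or_gt (1 - p - 2*ε) 0 with hcase | hcase
    · have h0 : 0 ≤ y i := (hrange i).1
      nlinarith [hS.le]
    · set k : ℕ := ⌈(1 - p - 2*ε)/ε⌉₊ with hk
      have hx0 : 0 ≤ (1 - p - 2*ε)/ε := by positivity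
      have hk1 : 1 - p - 2*ε ≤ k * ε := by
        have := Nat.le_ceil ((1 - p - 2*ε)/ε)
        calc 1 - p - 2*ε = ((1 - p - 2*ε)/ε) * ε := by field_simp
          _ ≤ k * ε := mul_le_mul_of_nonneg_right this hε.le
      have hk2 : (k:ℝ) * ε < 1 - p - ε := by
        have h := Nat.ceil_lt_add_one hx0
        have : (k:ℝ) < (1 - p - 2*ε)/ε + 1 := h
        calc (k:ℝ) * ε < ((1 - p - 2*ε)/ε + 1) * ε := by
              apply mul_lt_mul_of_pos_right this hε
          _ = 1 - p - ε := by field_simp; ring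
      have hkK : k ≤ ⌊1/ε⌋₊ := by
        apply Nat.le_floor
        rw [le_div_iff₀ hε]
        nlinarith
      have hb := hgrid k hkK
      rw [abs_le] at hb
      have hcount : ((i:ℕ):ℝ) + 1 < ((univ.filter (fun j => S * (k * ε) < y j)).card : ℝ) := by
        have : (m:ℝ) * p = (i:ℕ) + 1 := by rw [hp]; field_simp
        nlinarith [hb.1]
      have hlt : (i:ℕ) < (univ.filter (fun j => S * (k * ε) < y j)).card := by
        have h2 : ((i:ℕ):ℝ) < ((univ.filter (fun j => S * (k * ε) < y j)).card : ℝ) := by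
          linarith
        exact_mod_cast h2
      have := (aux_count_lt y hsort (S * (k*ε)) i).2 hlt
      nlinarith
  · -- upper bound: y i - S(1-p) ≤ 2Sε
    rcases le_or_gt p (2*ε) with hcase | hcase
    · have h1 : y i ≤ S := (hrange i).2
      nlinarith
    · set k : ℕ := ⌊(1 - p)/ε⌋₊ + 2 with hk
      have hx0 : 0 ≤ (1 - p)/ε := by
        apply div_nonneg (by linarith) hε.le
      have hk1 : 1 - p + ε < (k:ℝ) * ε := by
        have h := Nat.sub_one_lt_floor ((1 - p)/ε)
        have hkk : (1-p)/ε + 1 < (k:ℝ) := by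
          push_cast [hk]
          linarith
        calc 1 - p + ε = ((1-p)/ε + 1) * ε := by field_simp
          _ < k * ε := mul_lt_mul_of_pos_right hkk hε
      have hk2 : (k:ℝ) * ε ≤ 1 - p + 2*ε := by
        have h := Nat.floor_le hx0
        have hkk : (k:ℝ) ≤ (1-p)/ε + 2 := by
          push_cast [hk]
          linarith
        calc (k:ℝ) * ε ≤ ((1-p)/ε + 2) * ε := by
              apply mul_le_mul_of_nonneg_right hkk hε.le
          _ = 1 - p + 2*ε := by field_simp
      have hkK : k ≤ ⌊1/ε⌋₊ := by
        apply Nat.le_floor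
        rw [le_div_iff₀ hε]
        nlinarith
      have hb := hgrid k hkK
      rw [abs_le] at hb
      have hcount : ((univ.filter (fun j => S * (k * ε) < y j)).card : ℝ) < ((i:ℕ):ℝ) + 1 := by
        have : (m:ℝ) * p = (i:ℕ) + 1 := by rw [hp]; field_simp
        nlinarith [hb.2]
      have hnlt : ¬ ((i:ℕ) < (univ.filter (fun j => S * (k * ε) < y j)).card) := by
        intro h
        have : ((i:ℕ):ℝ) + 1 ≤ ((univ.filter (fun j => S * (k * ε) < y j)).card : ℝ) := by
          exact_mod_cast h
        linarith
      have hyi : y i ≤ S * (k * ε) := by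
        by_contra hgt
        push_neg at hgt
        exact hnlt ((aux_count_lt y hsort (S * (k*ε)) i).1 hgt)
      nlinarith

open MeasureTheory Finset

lemma aux_unif_tail {Ω : Type*} [MeasurableSpace Ω] (μ : Measure Ω)
    (S : ℝ) (hS : 0 < S) (X : Ω → ℝ) (hu : pdf.IsUniform X (Set.Icc (0:ℝ) S) μ)
    (t : ℝ) (ht0 : 0 ≤ t) (htS : t ≤ S) :
    μ {ω | t < X ω} = ENNReal.ofReal ((S - t) / S) := by
  have hvol : volume (Set.Icc (0:ℝ) S) = ENNReal.ofReal S := by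
    rw [Real.volume_Icc]; ring_nf
  have hns : volume (Set.Icc (0:ℝ) S) ≠ 0 := by
    rw [hvol]; simp [hS, ENNReal.ofReal_eq_zero, not_le]
  have hnt : volume (Set.Icc (0:ℝ) S) ≠ ⊤ := by rw [hvol]; exact ENNReal.ofReal_ne_top
  have h := hu.measure_preimage hns hnt (measurableSet_Ioi (a := t))
  have hset : X ⁻¹' Set.Ioi t = {ω | t < X ω} := rfl
  have hint : Set.Icc (0:ℝ) S ∩ Set.Ioi t = Set.Ioc t S := by
    ext x
    simp only [Set.mem_inter_iff, Set.mem_Icc, Set.mem_Ioi, Set.mem_Ioc]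
    constructor
    · rintro ⟨⟨_, h2⟩, h3⟩; exact ⟨h3, h2⟩
    · rintro ⟨h1, h2⟩; exact ⟨⟨le_trans ht0 h1.le, h2⟩, h1⟩
  rw [hset, hint, hvol, Real.volume_Ioc] at h
  rw [h, ENNReal.ofReal_div_of_pos hS]

lemma aux_unif_range {Ω : Type*} [MeasurableSpace Ω] (μ : Measure Ω)
    (S : ℝ) (hS : 0 < S) (X : Ω → ℝ) (hu : pdf.IsUniform X (Set.Icc (0:ℝ) S) μ) :
    μ {ω | X ω ∉ Set.Icc (0:ℝ) S} = 0 := by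
  have hvol : volume (Set.Icc (0:ℝ) S) = ENNReal.ofReal S := by
    rw [Real.volume_Icc]; ring_nf
  have hns : volume (Set.Icc (0:ℝ) S) ≠ 0 := by
    rw [hvol]; simp [hS, ENNReal.ofReal_eq_zero, not_le]
  have hnt : volume (Set.Icc (0:ℝ) S) ≠ ⊤ := by rw [hvol]; exact ENNReal.ofReal_ne_top
  have h := hu.measure_preimage hns hnt (measurableSet_Icc (a := (0:ℝ)) (b := S)).compl
  have hset : X ⁻¹' (Set.Icc (0:ℝ) S)ᶜ = {ω | X ω ∉ Set.Icc (0:ℝ) S} := rfl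
  rw [hset, Set.inter_compl_self] at h
  simpa using h

lemma aux_card_perm {m : ℕ} (σ : Equiv.Perm (Fin m)) (p : Fin m → Prop) [DecidablePred p] :
    (univ.filter (fun j => p (σ j))).card = (univ.filter p).card := by
  apply Finset.card_bij (fun a _ => σ a)
  · intro a ha
    simp only [Finset.mem_filter, Finset.mem_univ, true_and] at ha ⊢
    exact ha
  · intro a _ b _ hab
    exact σ.injective hab
  · intro b hb
    refine ⟨σ.symm b, ?_, by simp⟩
    simp only [Finset.mem_filter, Finset.mem_univ, true_and] at hb ⊢
    simpa using hb

/-- Let `X_1,…,X_m` be i.i.d. uniform on `[0,S]` (with `S > 0`). Then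
with probability at least `1 − 4·m^{−1/4}`, simultaneously for all `i ∈ {1,…,m}` the
`i`-th largest sample `X_{(i)}` satisfies `|X_{(i)} − S(1 − i/m)| ≤ 2S·m^{−1/4}`.
Here the decreasing rearrangement is expressed via a permutation `σ` that sorts the
samples in nonincreasing order, so `X_{(i)} = X_{σ(i)}` (0-indexed: index `i : Fin m`
corresponds to the `(i+1)`-th largest value). -/
theorem statement_12
    (Ω : Type*) [MeasurableSpace Ω] (μ : Measure Ω) [IsProbabilityMeasure μ]
    (m : ℕ) (hm : 0 < m) (S : ℝ) (hS : 0 < S)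
    (X : Fin m → Ω → ℝ) (hmeas : ∀ i, Measurable (X i))
    (hindep : ProbabilityTheory.iIndepFun X μ)
    (hunif : ∀ i, MeasureTheory.pdf.IsUniform (X i) (Set.Icc (0 : ℝ) S) μ) :
    ENNReal.ofReal (1 - 4 * (m : ℝ) ^ (-(1 / 4 : ℝ))) ≤
      μ {ω | ∃ σ : Equiv.Perm (Fin m),
        (∀ a b : Fin m, a ≤ b → X (σ b) ω ≤ X (σ a) ω) ∧
        ∀ i : Fin m,
          |X (σ i) ω - S * (1 - ((i : ℕ) + 1) / m)| ≤ 2 * S * (m : ℝ) ^ (-(1 / 4 : ℝ))} := by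
  classical
  set ε : ℝ := (m : ℝ) ^ (-(1 / 4 : ℝ)) with hεdef
  rcases le_or_gt (1 - 4 * ε) 0 with hεbig | hεsmall
  · rw [ENNReal.ofReal_eq_zero.2 hεbig]; exact zero_le
  have hmR : (0:ℝ) < m := by exact_mod_cast hm
  have hε : 0 < ε := Real.rpow_pos_of_pos hmR _
  have hε1 : ε ≤ 1 := Real.rpow_le_one_of_one_le_of_nonpos (by exact_mod_cast hm) (by norm_num)
  have hε4 : (m:ℝ) * ε ^ 4 = 1 := by
    have h4 : ε ^ (4:ℕ) = (m:ℝ) ^ ((-(1/4:ℝ)) * ((4:ℕ):ℝ)) := by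
      rw [hεdef, ← Real.rpow_natCast ((m:ℝ) ^ (-(1/4:ℝ))) 4, ← Real.rpow_mul hmR.le]
    rw [h4]
    norm_num
    rw [Real.rpow_neg_one]
    field_simp
  set K : ℕ := ⌊1/ε⌋₊ with hK
  have hKε : (K:ℝ) * ε ≤ 1 := by
    have h1 : (K:ℝ) ≤ 1/ε := Nat.floor_le (by positivity)
    calc (K:ℝ) * ε ≤ (1/ε) * ε := mul_le_mul_of_nonneg_right h1 hε.le
      _ = 1 := by field_simp
  set t : ℕ → ℝ := fun k => S * (k * ε) with ht
  set Y : ℕ → Fin m → Ω → ℝ := fun k j ω => if t k < X j ω then 1 else 0 with hY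
  set Z : ℕ → Ω → ℝ := fun k ω => ∑ j, Y k j ω with hZ
  have hmeasY : ∀ k j, Measurable (Y k j) := fun k j =>
    Measurable.ite (measurableSet_lt measurable_const (hmeas j)) measurable_const
      measurable_const
  have hmeasZ : ∀ k, Measurable (Z k) := fun k => Finset.measurable_sum _ fun j _ => hmeasY k j
  have hmem : ∀ k j, MemLp (Y k j) 2 μ := fun k j =>
    MemLp.of_bound ((hmeasY k j).aestronglyMeasurable) 1 (ae_of_all _ fun ω => by
      by_cases h : t k < X j ω <;> simp [hY, h])
  have hkey : ∀ k : ℕ, k ≤ K →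
      μ {ω | (m:ℝ) * ε ≤ |Z k ω - m * (1 - k * ε)|} ≤ ENNReal.ofReal (ε^2/4) := by
    intro k hk
    have hkε : (k:ℝ) * ε ≤ 1 := by
      have h1 : (k:ℝ) ≤ (K:ℝ) := by exact_mod_cast hk
      nlinarith
    have hkε0 : 0 ≤ (k:ℝ) * ε := by positivity
    have ht0 : 0 ≤ t k := by simp only [ht]; positivity
    have htS : t k ≤ S := by simp only [ht]; nlinarith
    have hEY : ∀ j, μ[Y k j] = 1 - k*ε := by
      intro j
      have hind : Y k j = Set.indicator {ω | t k < X j ω} (fun _ => (1:ℝ)) := by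
        funext ω; simp [hY, Set.indicator_apply]
      rw [hind, integral_indicator_const (1:ℝ)
        (measurableSet_lt measurable_const (hmeas j)), measureReal_def,
        aux_unif_tail μ S hS (X j) (hunif j) (t k) ht0 htS]
      rw [ENNReal.toReal_ofReal (div_nonneg (by linarith) hS.le)]
      simp only [ht, smul_eq_mul, mul_one]
      field_simp
    have hvar : ∀ j, ProbabilityTheory.variance (Y k j) μ ≤ 1/4 := by
      intro j
      have hsq : (Y k j) ^ 2 = Y k j := by
        funext ω; simp only [Pi.pow_apply, hY]; split <;> norm_num
      rw [ProbabilityTheory.variance_eq_sub (hmem k j), hsq, hEY j]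
      nlinarith [sq_nonneg (1/2 - (1 - (k:ℝ)*ε))]
    have hindY : ∀ a b : Fin m, a ≠ b → ProbabilityTheory.IndepFun (Y k a) (Y k b) μ := by
      intro a b hab
      have hcomp := hindep.comp (fun (_ : Fin m) (x : ℝ) => if t k < x then (1:ℝ) else 0)
        (fun j => Measurable.ite (measurableSet_lt measurable_const measurable_id)
          measurable_const measurable_const)
      have := hcomp.indepFun hab
      exact this
    have hZeq : Z k = ∑ j : Fin m, Y k j := by
      funext ω; simp [hZ, Finset.sum_apply]
    have hvarZ : ProbabilityTheory.variance (Z k) μ ≤ (m:ℝ)/4 := by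
      rw [hZeq, ProbabilityTheory.IndepFun.variance_sum (fun j _ => hmem k j)
        (fun a _ b hb hab => hindY a b hab)]
      calc ∑ j : Fin m, ProbabilityTheory.variance (Y k j) μ
          ≤ ∑ _j : Fin m, (1/4:ℝ) := Finset.sum_le_sum (fun j _ => hvar j)
        _ = m/4 := by simp [Finset.sum_const, Finset.card_univ]; ring
    have hmemZ : MemLp (Z k) 2 μ := by
      rw [hZeq]; exact memLp_finset_sum' _ (fun j _ => hmem k j)
    have hEZ : μ[Z k] = m * (1 - k*ε) := by
      have : μ[Z k] = ∑ j : Fin m, μ[Y k j] := by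
        rw [hZ]
        exact integral_finset_sum _ (fun j _ => (hmem k j).integrable one_le_two)
      rw [this]
      simp only [hEY]
      rw [Finset.sum_const, Finset.card_univ, Fintype.card_fin, nsmul_eq_mul]
    have hcheb := ProbabilityTheory.meas_ge_le_variance_div_sq (μ := μ) hmemZ
      (c := (m:ℝ)*ε) (by positivity)
    rw [hEZ] at hcheb
    refine le_trans hcheb (ENNReal.ofReal_le_ofReal ?_)
    rw [div_le_iff₀ (by positivity)]
    have hid : ε^2/4 * ((m:ℝ)*ε)^2 = ((m:ℝ) * ε^4) * (m/4) := by ring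
    rw [hid, hε4, one_mul]
    exact hvarZ
  -- the bad event
  set Bad : Set Ω := (⋃ k ∈ Finset.range (K+1), {ω | (m:ℝ)*ε ≤ |Z k ω - m * (1 - k*ε)|}) ∪
      (⋃ j, {ω | X j ω ∉ Set.Icc (0:ℝ) S}) with hBad
  have hBadMeas : MeasurableSet Bad := by
    apply MeasurableSet.union
    · exact MeasurableSet.biUnion (Finset.range (K+1)).countable_toSet (fun k _ =>
        measurableSet_le measurable_const ((hmeasZ k).sub measurable_const).abs)
    · exact MeasurableSet.iUnion fun j => ((hmeas j) measurableSet_Icc).compl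
  have hBadle : μ Bad ≤ ENNReal.ofReal (4*ε) := by
    rw [hBad]
    refine le_trans (measure_union_le _ _) ?_
    have h2 : μ (⋃ j, {ω | X j ω ∉ Set.Icc (0:ℝ) S}) = 0 :=
      measure_iUnion_null fun j => aux_unif_range μ S hS (X j) (hunif j)
    rw [h2, add_zero]
    refine le_trans (measure_biUnion_finset_le _ _) ?_
    calc ∑ k ∈ Finset.range (K+1), μ {ω | (m:ℝ)*ε ≤ |Z k ω - m*(1-k*ε)|}
        ≤ ∑ _k ∈ Finset.range (K+1), ENNReal.ofReal (ε^2/4) :=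
          Finset.sum_le_sum fun k hk =>
            hkey k (Nat.lt_succ_iff.mp (Finset.mem_range.mp hk))
      _ = (K+1 : ℕ) * ENNReal.ofReal (ε^2/4) := by
          rw [Finset.sum_const, Finset.card_range, nsmul_eq_mul]
      _ = ENNReal.ofReal (((K+1 : ℕ):ℝ) * (ε^2/4)) := by
          rw [ENNReal.ofReal_mul (by positivity), ENNReal.ofReal_natCast]
      _ ≤ ENNReal.ofReal (4*ε) := by
          apply ENNReal.ofReal_le_ofReal
          push_cast
          nlinarith
  have hsub : Badᶜ ⊆ {ω | ∃ σ : Equiv.Perm (Fin m),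
        (∀ a b : Fin m, a ≤ b → X (σ b) ω ≤ X (σ a) ω) ∧
        ∀ i : Fin m,
          |X (σ i) ω - S * (1 - ((i : ℕ) + 1) / m)| ≤ 2 * S * ε} := by
    intro ω hω
    rw [Set.mem_compl_iff, hBad, Set.mem_union] at hω
    push_neg at hω
    obtain ⟨hA, hB⟩ := hω
    have hgridω : ∀ k : ℕ, k ≤ K → |Z k ω - m * (1 - k*ε)| ≤ m*ε := by
      intro k hk
      by_contra hcon
      push_neg at hcon
      exact hA (Set.mem_iUnion₂.mpr ⟨k, Finset.mem_range.mpr (Nat.lt_succ_of_le hk), hcon.le⟩)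
    have hrangeω : ∀ j, X j ω ∈ Set.Icc (0:ℝ) S := by
      intro j
      by_contra hc
      exact hB (Set.mem_iUnion.mpr ⟨j, hc⟩)
    set σ : Equiv.Perm (Fin m) := Tuple.sort (fun j => -X j ω) with hσ
    have hsort : ∀ a b : Fin m, a ≤ b → X (σ b) ω ≤ X (σ a) ω := by
      intro a b hab
      have := Tuple.monotone_sort (fun j => -X j ω) hab
      simp only [Function.comp_apply] at this
      exact neg_le_neg_iff.mp this
    refine ⟨σ, hsort, ?_⟩
    refine aux_det S ε hS hε hε1 (fun j => X (σ j) ω) hsort (fun j => hrangeω (σ j)) ?_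
    intro k hk
    have hcard := aux_card_perm σ (fun j => S * (k*ε) < X j ω)
    have hsum : ((univ.filter (fun j => S * ((k:ℝ)*ε) < X j ω)).card : ℝ) = Z k ω := by
      rw [hZ]
      simp only [hY, ht]
      rw [← Finset.sum_boole]
    calc |((univ.filter (fun j => S * ((k:ℝ)*ε) < X (σ j) ω)).card : ℝ) - m * (1 - k*ε)|
        = |((univ.filter (fun j => S * ((k:ℝ)*ε) < X j ω)).card : ℝ) - m * (1 - k*ε)| := by
          rw [hcard]
      _ = |Z k ω - m * (1 - k*ε)| := by rw [hsum]
      _ ≤ m*ε := hgridω k hk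
  calc ENNReal.ofReal (1 - 4*ε) ≤ 1 - ENNReal.ofReal (4*ε) := by
        apply ENNReal.le_sub_of_add_le_right ENNReal.ofReal_ne_top
        rw [← ENNReal.ofReal_add (by linarith) (by positivity)]
        norm_num
      _ ≤ 1 - μ Bad := tsub_le_tsub le_rfl hBadle
      _ = μ Badᶜ := (prob_compl_eq_one_sub hBadMeas).symm
      _ ≤ _ := measure_mono hsub
end

section
/- Let n be even, let G_1,…,G_p be pairwise disjoint subsets of the items {1,…,m}, and let L_pre, U_pre ∈ ℤ^{n×p} be such that at least one ranking R_pre satisfies the prefix-based constraints: (L_pre)_{jℓ} ≤ Σ_{i∈G_ℓ} Σ_{t=1}^{j} (R_pre)_{it} ≤ (U_pre)_{jℓ} for all j ∈ [n] and ℓ ∈ [p]. Then there exist matrices L, U ∈ ℤ^{(n/2)×p} such that every ranking R satisfying the block-based (L,U)-group-fairness constraints with blocks B_j = {2j−1, 2j} (j = 1,…,n/2) violates the prefix-based constraints by at most an additive factor of 1; that is, for all j ∈ [n] and ℓ ∈ [p], (L_pre)_{jℓ} − 1 ≤ Σ_{i∈G_ℓ} Σ_{t=1}^{j} R_{it} ≤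 (U_pre)_{jℓ} + 1. -/
open Finset

namespace S13aux

/-- Sum of 0/1-valued function equals a cardinality. -/
lemma sum01 {α : Type*} (s : Finset α) (f : α → ℝ)
    (h : ∀ x ∈ s, f x = 0 ∨ f x = 1) :
    ∑ x ∈ s, f x = ((s.filter fun x => f x = 1).card : ℝ) := by
  classical
  rw [Finset.card_filter, Nat.cast_sum]
  apply Finset.sum_congr rfl
  intro x hx
  rcases h x hx with h0 | h0 <;> simp [h0]

noncomputable def colSum {m n : ℕ} (Gl : Finset (Fin m)) (R : Matrix (Fin m) (Fin n) ℝ)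
    (t : Fin n) : ℝ := ∑ i ∈ Gl, R i t

noncomputable def prefSum {m n : ℕ} (Gl : Finset (Fin m)) (R : Matrix (Fin m) (Fin n) ℝ)
    (c : ℕ) : ℝ :=
  ∑ t ∈ Finset.univ.filter (fun t : Fin n => t.val < c), colSum Gl R t

lemma prefSum_zero {m n : ℕ} (Gl : Finset (Fin m)) (R : Matrix (Fin m) (Fin n) ℝ) :
    prefSum Gl R 0 = 0 := by
  unfold prefSum
  rw [Finset.filter_false_of_mem (by intro t _; omega)]
  simp

lemma prefSum_succ {m n : ℕ} (Gl : Finset (Fin m)) (R : Matrix (Fin m) (Fin n) ℝ)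
    (c : ℕ) (hc : c < n) :
    prefSum Gl R (c + 1) = prefSum Gl R c + colSum Gl R ⟨c, hc⟩ := by
  unfold prefSum
  have hins : Finset.univ.filter (fun t : Fin n => t.val < c + 1)
      = insert ⟨c, hc⟩ (Finset.univ.filter (fun t : Fin n => t.val < c)) := by
    ext t
    simp [Fin.ext_iff]
    omega
  rw [hins, Finset.sum_insert (by simp)]
  ring

lemma colSum_nonneg {m n : ℕ} {Gl : Finset (Fin m)} {R : Matrix (Fin m) (Fin n) ℝ}
    (hR : IsRanking m n R) (t : Fin n) : 0 ≤ colSum Gl R t := by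
  apply Finset.sum_nonneg
  intro i _
  rcases hR.1 i t with h | h <;> rw [h] <;> norm_num

lemma colSum_le_one {m n : ℕ} {Gl : Finset (Fin m)} {R : Matrix (Fin m) (Fin n) ℝ}
    (hR : IsRanking m n R) (t : Fin n) : colSum Gl R t ≤ 1 := by
  have h1 := hR.2.2 t
  calc colSum Gl R t ≤ ∑ i, R i t := by
        apply Finset.sum_le_sum_of_subset_of_nonneg (Finset.subset_univ _)
        intro i _ _
        rcases hR.1 i t with h | h <;> rw [h] <;> norm_num
    _ = 1 := h1

lemma blockset {q : ℕ} (j : Fin q) :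
    Finset.univ.filter (fun t : Fin (2 * q) => t.val = 2 * j.val ∨ t.val = 2 * j.val + 1)
      = {⟨2 * j.val, by omega⟩, ⟨2 * j.val + 1, by omega⟩} := by
  ext t
  simp [Fin.ext_iff]

lemma blocksum_eq {m q : ℕ} (Gl : Finset (Fin m)) (R : Matrix (Fin m) (Fin (2 * q)) ℝ)
    (j : Fin q) :
    (∑ i ∈ Gl, ∑ t ∈ Finset.univ.filter
        (fun t : Fin (2 * q) => t.val = 2 * j.val ∨ t.val = 2 * j.val + 1), R i t)
      = colSum Gl R ⟨2 * j.val, by omega⟩ + colSum Gl R ⟨2 * j.val + 1, by omega⟩ := by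
  rw [Finset.sum_comm (f := fun i t => R i t), blockset]
  rw [Finset.sum_pair (by simp [Fin.ext_iff])]
  rfl

lemma Iic_eq {q : ℕ} (j : Fin (2 * q)) :
    (Finset.Iic j) = Finset.univ.filter (fun t : Fin (2 * q) => t.val < j.val + 1) := by
  ext t
  simp only [Finset.mem_Iic, Finset.mem_filter, Finset.mem_univ, true_and, Fin.le_def]
  omega

lemma prefix_eq {m q : ℕ} (Gl : Finset (Fin m)) (R : Matrix (Fin m) (Fin (2 * q)) ℝ)
    (j : Fin (2 * q)) :
    (∑ i ∈ Gl, ∑ t ∈ Finset.Iic j, R i t) = prefSum Gl R (j.val + 1) := by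
  rw [Iic_eq, Finset.sum_comm (f := fun i t => R i t)]
  rfl

end S13aux


/-- Let `n = 2q` be even, with blocks `B_j = {2j−1, 2j}` (0-indexed:
`{2j, 2j+1}` for `j : Fin q`). If at least one ranking satisfies the prefix-based
`(L_pre, U_pre)`-group-fairness constraints, then there exist `L, U ∈ ℤ^{q×p}` such
that every ranking satisfying the block-based `(L,U)`-group-fairness constraints
violates the prefix-based constraints by at most an additive factor of `1`. -/
theorem statement_13 (m q p : ℕ) (hmn : 2 * q ≤ m)
    (G : Fin p → Finset (Fin m))
    (hG : ∀ ℓ ℓ' : Fin p, ℓ ≠ ℓ' → Disjoint (G ℓ) (G ℓ'))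
    (Lpre Upre : Fin (2 * q) → Fin p → ℤ)
    (hfeas : ∃ Rpre : Matrix (Fin m) (Fin (2 * q)) ℝ, IsRanking m (2 * q) Rpre ∧
      ∀ (j : Fin (2 * q)) (ℓ : Fin p),
        (Lpre j ℓ : ℝ) ≤ (∑ i ∈ G ℓ, ∑ t ∈ Finset.Iic j, Rpre i t) ∧
          (∑ i ∈ G ℓ, ∑ t ∈ Finset.Iic j, Rpre i t) ≤ (Upre j ℓ : ℝ)) :
    ∃ L U : Fin q → Fin p → ℤ,
      ∀ R : Matrix (Fin m) (Fin (2 * q)) ℝ, IsRanking m (2 * q) R →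
        (∀ (j : Fin q) (ℓ : Fin p),
          (L j ℓ : ℝ) ≤ (∑ i ∈ G ℓ, ∑ t ∈ Finset.univ.filter
              (fun t : Fin (2 * q) => t.val = 2 * j.val ∨ t.val = 2 * j.val + 1), R i t) ∧
            (∑ i ∈ G ℓ, ∑ t ∈ Finset.univ.filter
              (fun t : Fin (2 * q) => t.val = 2 * j.val ∨ t.val = 2 * j.val + 1), R i t) ≤
              (U j ℓ : ℝ)) →
        ∀ (j : Fin (2 * q)) (ℓ : Fin p),
          (Lpre j ℓ : ℝ) - 1 ≤ (∑ i ∈ G ℓ, ∑ t ∈ Finset.Iic j, R i t) ∧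
            (∑ i ∈ G ℓ, ∑ t ∈ Finset.Iic j, R i t) ≤ (Upre j ℓ : ℝ) + 1 := by
  classical
  obtain ⟨Rpre, hRpre, hbnd⟩ := hfeas
  refine ⟨fun j ℓ => ((((G ℓ) ×ˢ (Finset.univ.filter
      (fun t : Fin (2 * q) => t.val = 2 * j.val ∨ t.val = 2 * j.val + 1))).filter
      fun x => Rpre x.1 x.2 = 1).card : ℤ),
    fun j ℓ => ((((G ℓ) ×ˢ (Finset.univ.filter
      (fun t : Fin (2 * q) => t.val = 2 * j.val ∨ t.val = 2 * j.val + 1))).filter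
      fun x => Rpre x.1 x.2 = 1).card : ℤ), ?_⟩
  have hLval : ∀ (j : Fin q) (ℓ : Fin p),
      (((((G ℓ) ×ˢ (Finset.univ.filter
        (fun t : Fin (2 * q) => t.val = 2 * j.val ∨ t.val = 2 * j.val + 1))).filter
        fun x => Rpre x.1 x.2 = 1).card : ℤ) : ℝ)
      = ∑ i ∈ G ℓ, ∑ t ∈ Finset.univ.filter
          (fun t : Fin (2 * q) => t.val = 2 * j.val ∨ t.val = 2 * j.val + 1), Rpre i t := by
    intro j ℓ
    rw [← Finset.sum_product' (f := fun i t => Rpre i t)]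
    rw [S13aux.sum01 _ _ (fun x _ => hRpre.1 x.1 x.2)]
    push_cast
    rfl
  intro R hR hfair j ℓ
  have hbe : ∀ (k : ℕ) (hk : k < q) (ha : 2 * k < 2 * q) (hb : 2 * k + 1 < 2 * q),
      S13aux.colSum (G ℓ) R ⟨2 * k, ha⟩ + S13aux.colSum (G ℓ) R ⟨2 * k + 1, hb⟩
      = S13aux.colSum (G ℓ) Rpre ⟨2 * k, ha⟩ + S13aux.colSum (G ℓ) Rpre ⟨2 * k + 1, hb⟩ := by
    intro k hk ha hb
    have h1 := (hfair ⟨k, hk⟩ ℓ).1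
    have h2 := (hfair ⟨k, hk⟩ ℓ).2
    rw [hLval ⟨k, hk⟩ ℓ] at h1 h2
    have heq := le_antisymm h2 h1
    exact (S13aux.blocksum_eq (G ℓ) R ⟨k, hk⟩).symm.trans
      (heq.trans (S13aux.blocksum_eq (G ℓ) Rpre ⟨k, hk⟩))
  have hS : ∀ k : ℕ, k ≤ q →
      S13aux.prefSum (G ℓ) R (2 * k) = S13aux.prefSum (G ℓ) Rpre (2 * k) := by
    intro k
    induction k with
    | zero => intro _; simp [S13aux.prefSum_zero]
    | succ k ih =>
      intro hk
      have hk' : k ≤ q := by omega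
      have h2k : 2 * k < 2 * q := by omega
      have h2k1 : 2 * k + 1 < 2 * q := by omega
      rw [show 2 * (k + 1) = (2 * k + 1) + 1 by ring]
      rw [S13aux.prefSum_succ _ R _ h2k1, S13aux.prefSum_succ _ Rpre _ h2k1]
      rw [S13aux.prefSum_succ _ R _ h2k, S13aux.prefSum_succ _ Rpre _ h2k]
      have hcol := hbe k (by omega) h2k h2k1
      rw [ih hk']
      linarith
  rw [S13aux.prefix_eq]
  have hb1 := (hbnd j ℓ).1
  have hb2 := (hbnd j ℓ).2
  rw [S13aux.prefix_eq] at hb1 hb2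
  rcases Nat.even_or_odd j.val with ⟨k, hk⟩ | ⟨k, hk⟩
  · -- even : j.val = k + k
    have hj : j.val = 2 * k := by omega
    have hkq : k < q := by have := j.2; omega
    have h2k : 2 * k < 2 * q := by omega
    rw [hj] at hb1 hb2 ⊢
    rw [S13aux.prefSum_succ _ R _ h2k, S13aux.prefSum_succ _ Rpre _ h2k] at *
    have hP := hS k (le_of_lt hkq)
    have c1 := S13aux.colSum_nonneg (Gl := G ℓ) hR ⟨2 * k, h2k⟩
    have c2 := S13aux.colSum_le_one (Gl := G ℓ) hR ⟨2 * k, h2k⟩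
    have c3 := S13aux.colSum_nonneg (Gl := G ℓ) hRpre ⟨2 * k, h2k⟩
    have c4 := S13aux.colSum_le_one (Gl := G ℓ) hRpre ⟨2 * k, h2k⟩
    constructor <;> linarith
  · -- odd : j.val = 2 * k + 1
    have hkq : k + 1 ≤ q := by have := j.2; omega
    have hP := hS (k + 1) hkq
    rw [show 2 * (k + 1) = (2 * k + 1) + 1 by ring] at hP
    rw [hk] at hb1 hb2 ⊢
    rw [hP]
    constructor <;> linarith
end

section
/- Consider m = n = 4, one protected group G_1 = {1,2}, blocks B_1 = {1,2} and B_2 = {3} of positions, a group-fairness upper bound requiring at most one item of G_1 in B_1, and individual-fairness lower bounds. Let Π = (1/2)·[[1,0,1,0],[0,1,0,1],[0,1,1,0],[1,0,0,1]]. Then Π is an extreme point of the polytope of matrices D ∈ [0,1]^{4×4} satisfying: Σ_i D_{ij} = 1 for all j, Σ_j D_{ij} ≤ 1 for all i, D_{i1} + D_{i2} ≥ 1/2 for all i ∈ {1,2,3,4}, D_{33} ≥ 1/2, and D_{11}+D_{12}+D_{21}+D_{22} ≤ 1. In particular, Π is a vertex of this polytope with fractional (non-integer) entries. -/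
open Finset

/-- The feasible polytope: `D ∈ [0,1]^{4×4}` with unit column sums, row sums at most 1,
individual-fairness lower bounds `D_{i1} + D_{i2} ≥ 1/2` for each item `i` and
`D_{33} ≥ 1/2` (0-indexed: `D 2 2 ≥ 1/2`), and the group-fairness constraint
`D_{11} + D_{12} + D_{21} + D_{22} ≤ 1`. -/
def FeasibleSet : Set (Matrix (Fin 4) (Fin 4) ℝ) :=
  {D | (∀ i j, 0 ≤ D i j ∧ D i j ≤ 1) ∧
       (∀ j, ∑ i, D i j = 1) ∧
       (∀ i, ∑ j, D i j ≤ 1) ∧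
       (∀ i, 1 / 2 ≤ D i 0 + D i 1) ∧
       (1 / 2 ≤ D 2 2) ∧
       (D 0 0 + D 0 1 + D 1 0 + D 1 1 ≤ 1)}

lemma key (D : Matrix (Fin 4) (Fin 4) ℝ) (hD : D ∈ FeasibleSet)
    (z01 : D 0 1 = 0) (z03 : D 0 3 = 0) (z10 : D 1 0 = 0) (z12 : D 1 2 = 0)
    (z20 : D 2 0 = 0) (z23 : D 2 3 = 0) (z31 : D 3 1 = 0) (z32 : D 3 2 = 0) :
    D = PiMat := by
  obtain ⟨hbx, hcol, hrow, hfair, h33, hgrp⟩ := hD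
  have c0 := hcol 0; have c1 := hcol 1; have c2 := hcol 2; have c3 := hcol 3
  have r0 := hrow 0; have r1 := hrow 1; have r2 := hrow 2; have r3 := hrow 3
  have f0 := hfair 0; have f1 := hfair 1; have f2 := hfair 2; have f3 := hfair 3
  simp only [Fin.sum_univ_four] at c0 c1 c2 c3 r0 r1 r2 r3
  have e00 : D 0 0 = 1/2 := by linarith
  have e02 : D 0 2 = 1/2 := by linarith
  have e11 : D 1 1 = 1/2 := by linarith
  have e13 : D 1 3 = 1/2 := by linarith
  have e21 : D 2 1 = 1/2 := by linarith
  have e22 : D 2 2 = 1/2 := by linarith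
  have e30 : D 3 0 = 1/2 := by linarith
  have e33 : D 3 3 = 1/2 := by linarith
  ext i j
  fin_cases i <;> fin_cases j <;>
    simp only [PiMat, Matrix.smul_apply, smul_eq_mul, Fin.isValue] <;>
    norm_num <;>
    first
      | exact e00 | exact e02 | exact e11 | exact e13 | exact e21 | exact e22
      | exact e30 | exact e33
      | exact z01 | exact z03 | exact z10 | exact z12 | exact z20 | exact z23
      | exact z31 | exact z32

/-- `Π` is an extreme point (vertex) of the feasible polytope, and it
has fractional (non-integer) entries. -/
theorem statement_15 :
    PiMat ∈ Set.extremePoints ℝ FeasibleSet ∧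
    ∃ i j, PiMat i j ≠ 0 ∧ PiMat i j ≠ 1 := by
  have hmem : PiMat ∈ FeasibleSet := by
    refine ⟨?_, ?_, ?_, ?_, ?_, ?_⟩
    · intro i j; fin_cases i <;> fin_cases j <;> norm_num [PiMat]
    · intro j; fin_cases j <;> simp [PiMat, Fin.sum_univ_four] <;> norm_num
    · intro i; fin_cases i <;> simp [PiMat, Fin.sum_univ_four] <;> norm_num
    · intro i; fin_cases i <;> norm_num [PiMat]
    · simp [PiMat] <;> norm_num
    · norm_num [PiMat]
  constructor
  · refine ⟨hmem, ?_⟩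
    rintro x hx y hy ⟨a, b, ha, hb, hab, heq⟩
    have hzx : ∀ i j, PiMat i j = 0 → x i j = 0 ∧ y i j = 0 := by
      intro i j hz
      have h : a * x i j + b * y i j = 0 := by
        have := congrFun (congrFun heq i) j
        simpa [Matrix.add_apply, Matrix.smul_apply, smul_eq_mul, hz] using this
      have hx0 := (hx.1 i j).1
      have hy0 := (hy.1 i j).1
      constructor
      · by_contra hne
        have hpos : 0 < x i j := hx0.lt_of_ne (Ne.symm hne)
        nlinarith [mul_pos ha hpos, mul_nonneg hb.le hy0]
      · by_contra hne
        have hpos : 0 < y i j := hy0.lt_of_ne (Ne.symm hne)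
        nlinarith [mul_pos hb hpos, mul_nonneg ha.le hx0]
    have hzp : ∀ (D : Matrix (Fin 4) (Fin 4) ℝ), D ∈ FeasibleSet →
        (∀ i j, PiMat i j = 0 → D i j = 0) → D = PiMat := by
      intro D hD hz
      exact key D hD (hz 0 1 (by simp [PiMat])) (hz 0 3 (by simp [PiMat]))
        (hz 1 0 (by simp [PiMat])) (hz 1 2 (by simp [PiMat]))
        (hz 2 0 (by simp [PiMat])) (hz 2 3 (by simp [PiMat]))
        (hz 3 1 (by simp [PiMat])) (hz 3 2 (by simp [PiMat]))
    exact hzp x hx (fun i j h => (hzx i j h).1)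
  · exact ⟨0, 0, by norm_num [PiMat], by norm_num [PiMat]⟩
end
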